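/- arXiv:1512.05475 — 6 statements merged into one kernel-verified Lean document; each statement's English description precedes it below -/
import Mathlib

section
/- For every nonnegative integer j, the unary automaton A_j with states α_0,…,α_{2j}, initial state α_0, final states {α_0, α_j}, and transitions α_i →a α_{i+1} for 0 ≤ i < 2j and α_{2j} →a α_0, is a minimal deterministic finite automaton. -/
namespace BD

/-- Language-level First: symbols beginning some word of `L`. -/
def LFirst {α : Type*} (L : Set (List α)) : Set α := {x | ∃ w, x :: w ∈ L}

/-- Language-level Last. -/
def LLast {α : Type*} (L : Set (List α)) : Set α := {x | ∃ w, w ++ [x] ∈ L}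

/-- Language-level Follow. -/
def LFollow {α : Type*} (L : Set (List α)) (x : α) : Set α :=
  {y | ∃ u v, u ++ x :: y :: v ∈ L}

/-- The list of symbol occurrences of a regular expression. -/
def rchars {α : Type*} : RegularExpression α → List α
  | .zero => []
  | .epsilon => []
  | .char a => [a]
  | .plus p q => rchars p ++ rchars q
  | .comp p q => rchars p ++ rchars q
  | .star p => rchars p

/-- The Glushkov automaton of a (marked) language `L` over positions `π`,
with labelling map `f` dropping the marks. States are `Option π`, `none` being initial. -/
def glushkov {π β : Type*} (L : Set (List π)) (f : π → β) : NFA β (Option π) where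
  step q b :=
    match q with
    | none => {s | ∃ y, y ∈ LFirst L ∧ f y = b ∧ s = some y}
    | some x => {s | ∃ y, y ∈ LFollow L x ∧ f y = b ∧ s = some y}
  start := {none}
  accept := {s | ∃ y, y ∈ LLast L ∧ s = some y} ∪ {s | s = none ∧ [] ∈ L}

/-- Determinism of an automaton. -/
def Det {β σ : Type*} (A : NFA β σ) : Prop :=
  (∃ i, A.start = {i}) ∧
  ∀ p b q₁ q₂, q₁ ∈ A.step p b → q₂ ∈ A.step p b → q₁ = q₂

/-- `k`-lookahead determinism of an automaton. -/
def kLA {β σ : Type*} (A : NFA β σ) (k : ℕ) : Prop :=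
  (∃ i, A.start = {i}) ∧
  ∀ p b q₁ q₂, q₁ ∈ A.step p b → q₂ ∈ A.step p b → q₁ ≠ q₂ →
    ∀ w : List β, w.length = k - 1 → A.evalFrom {q₁} w = ∅ ∨ A.evalFrom {q₂} w = ∅

/-- `k`-block determinism of a block automaton (labels are nonempty words of length ≤ k,
single initial state, no outgoing label a prefix of another outgoing label). -/
def kBD {γ σ : Type*} (A : NFA (List γ) σ) (k : ℕ) : Prop :=
  (∃ i, A.start = {i}) ∧
  (∀ q b, (A.step q b).Nonempty → 1 ≤ b.length ∧ b.length ≤ k) ∧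
  (∀ p b₁ b₂ q₁ q₂, q₁ ∈ A.step p b₁ → q₂ ∈ A.step p b₂ →
      (b₁, q₁) ≠ (b₂, q₂) → ¬ b₁ <+: b₂)

/-- A language over `γ` is `k`-block deterministic if it is specified by a block
regular expression (given by its marked version `E` over positions `π` together with
the dropping map `f` to blocks) whose Glushkov automaton is `k`-block deterministic. -/
def IsKBlockDet {γ : Type} (L : Set (List γ)) (k : ℕ) : Prop :=
  ∃ (π : Type) (E : RegularExpression π) (f : π → List γ),
    (rchars E).Nodup ∧
    kBD (glushkov E.matches' f) k ∧
    L = {w | ∃ ws ∈ E.matches', (ws.map f).flatten = w}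

/-- A language is `k`-lookahead deterministic if specified by a regular expression
whose Glushkov automaton is `k`-lookahead deterministic. -/
def IsKLookaheadDet {γ : Type} (L : Set (List γ)) (k : ℕ) : Prop :=
  ∃ (π : Type) (E : RegularExpression π) (f : π → γ),
    (rchars E).Nodup ∧
    kLA (glushkov E.matches' f) k ∧
    L = {w | ∃ ws ∈ E.matches', ws.map f = w}

/-- A language is one-unambiguous if specified by a regular expression with
deterministic Glushkov automaton. -/
def IsOneUnambiguous {γ : Type} (L : Set (List γ)) : Prop :=
  ∃ (π : Type) (E : RegularExpression π) (f : π → γ),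
    (rchars E).Nodup ∧
    Det (glushkov E.matches' f) ∧
    L = {w | ∃ ws ∈ E.matches', ws.map f = w}

/-- Reachability in an automaton. -/
def Reach {β σ : Type*} (A : NFA β σ) (p q : σ) : Prop := ∃ w, q ∈ A.evalFrom {p} w

/-- `O` is an orbit (strongly connected component) of `A`. -/
def IsOrbit {β σ : Type*} (A : NFA β σ) (O : Set σ) : Prop :=
  ∃ q, O = {p | Reach A p q ∧ Reach A q p}

/-- A non-trivial orbit: one containing a cycle. -/
def NonTrivial {β σ : Type*} (A : NFA β σ) (O : Set σ) : Prop :=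
  ∃ p ∈ O, ∃ w : List β, w ≠ [] ∧ p ∈ A.evalFrom {p} w

/-- In-gate of an orbit. -/
def InGate {β σ : Type*} (A : NFA β σ) (O : Set σ) (q : σ) : Prop :=
  q ∈ O ∧ (q ∈ A.start ∨ ∃ p ∉ O, ∃ b, q ∈ A.step p b)

/-- Out-gate of an orbit. -/
def OutGate {β σ : Type*} (A : NFA β σ) (O : Set σ) (q : σ) : Prop :=
  q ∈ O ∧ (q ∈ A.accept ∨ ∃ p ∉ O, ∃ b, p ∈ A.step q b)

end BD

namespace BD

/-- The unary cyclic automaton `A_j` with `2j+1` states `α_0, …, α_{2j}`,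
initial state `α_0`, final states `{α_0, α_j}`, and `α_i →a α_{i+1 mod 2j+1}`. -/
def A3 (j : ℕ) : DFA Unit (Fin (2 * j + 1)) where
  step q _ := ⟨(q.1 + 1) % (2 * j + 1), Nat.mod_lt _ (by omega)⟩
  start := ⟨0, by omega⟩
  accept := {⟨0, by omega⟩, ⟨j, by omega⟩}

lemma A3_evalFrom (j : ℕ) (s : Fin (2*j+1)) (w : List Unit) :
    (A3 j).evalFrom s w = ⟨(s.1 + w.length) % (2*j+1), Nat.mod_lt _ (by omega)⟩ := by
  induction w generalizing s with
  | nil => simp [DFA.evalFrom, Nat.mod_eq_of_lt s.2]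
  | cons a w ih =>
      have : (A3 j).evalFrom s (a :: w) = (A3 j).evalFrom ((A3 j).step s a) w := rfl
      rw [this, ih]
      apply Fin.ext
      simp only [A3]
      rw [Nat.mod_add_mod]
      congr 1
      simp; omega

lemma A3_mem (j : ℕ) (w : List Unit) :
    w ∈ (A3 j).accepts ↔ (w.length % (2*j+1) = 0 ∨ w.length % (2*j+1) = j) := by
  rw [DFA.mem_accepts]
  show (A3 j).evalFrom _ w ∈ _ ↔ _
  rw [A3_evalFrom]
  simp [A3, Fin.ext_iff, Nat.mod_eq_of_lt (show j < 2*j+1 by omega)]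

lemma mod3 {a N : ℕ} (hN : 0 < N) (h : a < 3*N) :
    a % N = a ∨ a % N + N = a ∨ a % N + 2*N = a := by
  rcases Nat.lt_or_ge a N with h1 | h1
  · left; exact Nat.mod_eq_of_lt h1
  rcases Nat.lt_or_ge a (2*N) with h2 | h2
  · right; left
    rw [Nat.mod_eq_sub_mod h1, Nat.mod_eq_of_lt (by omega)]; omega
  · right; right
    rw [Nat.mod_eq_sub_mod h1, Nat.mod_eq_sub_mod (by omega), Nat.mod_eq_of_lt (by omega)]
    omega

lemma arith (j a b : ℕ) (ha : a < 2*j+1) (hb : b < 2*j+1)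
    (H : ∀ m, ((a+m)%(2*j+1) = 0 ∨ (a+m)%(2*j+1) = j) ↔
      ((b+m)%(2*j+1) = 0 ∨ (b+m)%(2*j+1) = j)) : a = b := by
  have h1 := (H (2*j+1 - a)).mp (Or.inl (by
    rw [show a + (2*j+1 - a) = 2*j+1 by omega, Nat.mod_self]))
  have h2 := (H (2*j+1 - a + j)).mp (Or.inr (by
    rw [show a + (2*j+1 - a + j) = (2*j+1) + j by omega, Nat.add_mod_left,
      Nat.mod_eq_of_lt (by omega)]))
  obtain ⟨r1, hr1⟩ : ∃ r, (b + (2*j+1 - a)) % (2*j+1) = r := ⟨_, rfl⟩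
  obtain ⟨r2, hr2⟩ : ∃ r, (b + (2*j+1 - a + j)) % (2*j+1) = r := ⟨_, rfl⟩
  have m1 := mod3 (a := b + (2*j+1 - a)) (N := 2*j+1) (by omega) (by omega)
  have m2 := mod3 (a := b + (2*j+1 - a + j)) (N := 2*j+1) (by omega) (by omega)
  rw [hr1] at h1 m1
  rw [hr2] at h2 m2
  omega

/-- `A_j` is a minimal deterministic finite automaton: every equivalent DFA has at
least `2j+1` states. -/
theorem stmt3 : ∀ j : ℕ, ∀ (σ : Type) [Fintype σ] (B : DFA Unit σ),
    B.accepts = (A3 j).accepts → 2 * j + 1 ≤ Fintype.card σ := by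
  intro j σ _ B hB
  have hinj : Function.Injective
      (fun i : Fin (2*j+1) => B.evalFrom B.start (List.replicate i.1 ())) := by
    intro i i' h
    simp only at h
    apply Fin.ext
    apply arith j i.1 i'.1 i.2 i'.2
    intro m
    have e1 : List.replicate (i.1+m) () ∈ B.accepts ↔
        List.replicate (i'.1+m) () ∈ B.accepts := by
      rw [DFA.mem_accepts, DFA.mem_accepts]
      show B.evalFrom _ _ ∈ _ ↔ B.evalFrom _ _ ∈ _
      rw [List.replicate_add, List.replicate_add, DFA.evalFrom_of_append,
        DFA.evalFrom_of_append, h]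
    rw [hB] at e1
    simpa [A3_mem] using e1
  calc 2*j+1 = Fintype.card (Fin (2*j+1)) := (Fintype.card_fin _).symm
    _ ≤ Fintype.card σ := Fintype.card_le_of_injective _ hinj


end BD
end

section
/- For every nonnegative integer j, the unary language L_j = { a^n : n ≡ 0 (mod 2j+1) or n ≡ j (mod 2j+1), with in the second case n = m(2j+1)+j for some m ≥ 0 } = L((a^{2j+1})^*(ε + a^j)) is (j+1)-lookahead deterministic. -/
namespace BD

/-- The unary language `L((a^{2j+1})^*(ε + a^j))`, i.e. the words whose length is
`m(2j+1)` or `m(2j+1)+j` for some `m ≥ 0`. -/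
def L4 (j : ℕ) : Set (List Unit) :=
  {w | ∃ m : ℕ, w.length = m * (2 * j + 1) ∨ w.length = m * (2 * j + 1) + j}

/-! ### Auxiliary development for `stmt4` -/

/-- Expression matching exactly the word `l`. -/
def chain {π : Type*} : List π → RegularExpression π
  | [] => .epsilon
  | x :: l => .comp (.char x) (chain l)

theorem matches'_chain {π : Type*} (l : List π) : (chain l).matches' = {l} := by
  induction l with
  | nil => rfl
  | cons x l ih =>
      ext w
      show w ∈ (RegularExpression.char x).matches' * (chain l).matches' ↔ _
      simp only [ih, Language.mem_mul, RegularExpression.matches'_char,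
        Set.mem_singleton_iff]
      constructor
      · rintro ⟨a, rfl, b, rfl, rfl⟩; rfl
      · rintro rfl; exact ⟨[x], rfl, l, rfl, rfl⟩

theorem rchars_chain {π : Type*} (l : List π) : rchars (chain l) = l := by
  induction l with
  | nil => rfl
  | cons x l ih => show [x] ++ rchars (chain l) = x :: l; rw [ih]; rfl

/-- The `a`-block of positions. -/
def Aw (j : ℕ) : List (ℕ ⊕ ℕ) := (List.range (2 * j + 1)).map Sum.inl

/-- The tail block of positions. -/
def Bw (j : ℕ) : List (ℕ ⊕ ℕ) := (List.range j).map Sum.inr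

/-- The marked expression `(a₁⋯a_{2j+1})* (ε + b₁⋯b_j)`. -/
def Ej (j : ℕ) : RegularExpression (ℕ ⊕ ℕ) :=
  .comp (.star (chain (Aw j))) (.plus .epsilon (chain (Bw j)))

/-- `m` copies of the `a`-block. -/
def Pj (j m : ℕ) : List (ℕ ⊕ ℕ) := (List.replicate m (Aw j)).flatten

theorem memb {j : ℕ} {w : List (ℕ ⊕ ℕ)} :
    w ∈ (Ej j).matches' ↔ ∃ m t, (t = [] ∨ t = Bw j) ∧ w = Pj j m ++ t := by
  show w ∈ (RegularExpression.star (chain (Aw j))).matches' *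
      (RegularExpression.plus .epsilon (chain (Bw j))).matches' ↔ _
  have h1 : (RegularExpression.star (chain (Aw j))).matches'
      = KStar.kstar (chain (Aw j)).matches' := rfl
  have h2 : (RegularExpression.plus RegularExpression.epsilon (chain (Bw j))).matches'
      = (1 : Language (ℕ ⊕ ℕ)) + (chain (Bw j)).matches' := rfl
  rw [h1, h2, matches'_chain, matches'_chain, Language.mem_mul]
  constructor
  · rintro ⟨a, ha, b, hb, rfl⟩
    rw [Language.mem_kstar] at ha
    obtain ⟨L, rfl, hL⟩ := ha
    have : L = List.replicate L.length (Aw j) :=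
      List.eq_replicate_of_mem (fun y hy => hL y hy)
    have hflat : L.flatten = Pj j L.length := by
      conv_lhs => rw [this]
      rfl
    rcases hb with hb | hb
    · rw [(Language.mem_one _).1 hb]
      exact ⟨L.length, [], Or.inl rfl, by rw [hflat]⟩
    · rw [Set.mem_singleton_iff.1 hb]
      exact ⟨L.length, Bw j, Or.inr rfl, by rw [hflat]⟩
  · rintro ⟨m, t, ht, rfl⟩
    refine ⟨Pj j m, ?_, t, ?_, rfl⟩
    · show (List.replicate m (Aw j)).flatten ∈ _
      exact Language.join_mem_kstar (fun y hy => List.eq_of_mem_replicate hy)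
    · rcases ht with rfl | rfl
      · exact Or.inl ((Language.mem_one _).2 rfl)
      · exact Or.inr rfl

theorem length_Pj (j m : ℕ) : (Pj j m).length = m * (2 * j + 1) := by
  simp [Pj, Aw, List.length_flatten, List.map_replicate, List.sum_replicate, smul_eq_mul]

theorem Pj_getElem? (j m n : ℕ) :
    (Pj j m)[n]? = if n < m * (2 * j + 1) then some (Sum.inl (n % (2 * j + 1))) else none := by
  induction m generalizing n with
  | zero => simp [Pj]
  | succ m ih =>
      have hP : Pj j (m + 1) = Aw j ++ Pj j m := by
        simp [Pj, List.replicate_succ]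
      have hA : (Aw j).length = 2 * j + 1 := by simp [Aw]
      rw [hP, List.getElem?_append, hA]
      by_cases h : n < 2 * j + 1
      · rw [if_pos h, if_pos, Aw, List.getElem?_map, List.getElem?_range h,
          Nat.mod_eq_of_lt h]
        · rfl
        · have : (m+1) * (2*j+1) = m * (2*j+1) + (2*j+1) := by ring
          omega
      · rw [if_neg h, ih]
        have hmod : (n - (2 * j + 1)) % (2 * j + 1) = n % (2 * j + 1) :=
          (Nat.mod_eq_sub_mod (Nat.not_lt.1 h)).symm
        have hmul : (m+1) * (2*j+1) = m * (2*j+1) + (2*j+1) := by ring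
        by_cases h2 : n - (2 * j + 1) < m * (2 * j + 1)
        · rw [if_pos h2, if_pos (by omega), hmod]
        · rw [if_neg h2, if_neg (by omega)]

theorem Bw_getElem? (j n : ℕ) :
    (Bw j)[n]? = if n < j then some (Sum.inr n) else none := by
  by_cases h : n < j
  · rw [if_pos h, Bw, List.getElem?_map, List.getElem?_range h]; rfl
  · rw [if_neg h]; exact List.getElem?_eq_none (by simpa [Bw] using Nat.not_lt.1 h)

theorem first_char {j : ℕ} {x : ℕ ⊕ ℕ} (hx : x ∈ LFirst (Ej j).matches') :
    x = Sum.inl 0 ∨ (0 < j ∧ x = Sum.inr 0) := by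
  obtain ⟨w, hw⟩ := hx
  obtain ⟨m, t, ht, he⟩ := memb.1 hw
  have h0 : (x :: w)[0]? = some x := by simp
  rw [he, List.getElem?_append] at h0
  rw [length_Pj] at h0
  by_cases h : 0 < m * (2 * j + 1)
  · rw [if_pos h, Pj_getElem?, if_pos h] at h0
    left; simpa using (Option.some_injective _ h0).symm
  · rw [if_neg h] at h0
    rcases ht with rfl | rfl
    · simp at h0
    · rw [Bw_getElem?] at h0
      by_cases hj : 0 - m * (2*j+1) < j
      · rw [if_pos hj] at h0
        have h5 : 0 - m * (2*j+1) = 0 := by omega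
        rw [h5] at h0
        right; exact ⟨by omega, (Option.some_injective _ h0).symm⟩
      · rw [if_neg hj] at h0; exact absurd h0 (by simp)

theorem follow_inr {j i : ℕ} {y : ℕ ⊕ ℕ} (hy : y ∈ LFollow (Ej j).matches' (Sum.inr i)) :
    i + 1 < j ∧ y = Sum.inr (i + 1) := by
  obtain ⟨u, v, hw⟩ := hy
  obtain ⟨m, t, ht, he⟩ := memb.1 hw
  set n := u.length with hn
  have hx : (u ++ Sum.inr i :: y :: v)[n]? = some (Sum.inr i) := by
    rw [List.getElem?_append_right (le_refl _)]
    simp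
  have hy' : (u ++ Sum.inr i :: y :: v)[n + 1]? = some y := by
    rw [List.getElem?_append_right (by omega)]
    have : n + 1 - u.length = 1 := by omega
    rw [this]; simp
  rw [he] at hx hy'
  rw [List.getElem?_append, length_Pj, Pj_getElem?] at hx hy'
  -- x is inr, so n is not in the P-part
  by_cases h : n < m * (2 * j + 1)
  · rw [if_pos h, if_pos h] at hx; simp at hx
  · rw [if_neg h] at hx
    rw [if_neg (show ¬ n + 1 < m * (2 * j + 1) by omega)] at hy'
    rcases ht with rfl | rfl
    · simp at hx
    · rw [Bw_getElem?] at hx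
      by_cases h2 : n - m * (2*j+1) < j
      · rw [if_pos h2] at hx
        have hi : i = n - m * (2*j+1) := by
          have := Option.some_injective _ hx; simp at this; omega
        rw [Bw_getElem?] at hy'
        by_cases h4 : n + 1 - m * (2*j+1) < j
        · rw [if_pos h4] at hy'
          have := (Option.some_injective _ hy').symm
          constructor
          · omega
          · rw [this]; congr 1; omega
        · rw [if_neg h4] at hy'; exact absurd hy' (by simp)
      · rw [if_neg h2] at hx; exact absurd hx (by simp)

theorem follow_inl {j i : ℕ} {y : ℕ ⊕ ℕ} (hy : y ∈ LFollow (Ej j).matches' (Sum.inl i)) :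
    y = Sum.inl ((i + 1) % (2 * j + 1)) ∨ (0 < j ∧ y = Sum.inr 0) := by
  obtain ⟨u, v, hw⟩ := hy
  obtain ⟨m, t, ht, he⟩ := memb.1 hw
  set n := u.length with hn
  have hx : (u ++ Sum.inl i :: y :: v)[n]? = some (Sum.inl i) := by
    rw [List.getElem?_append_right (le_refl _)]; simp
  have hy' : (u ++ Sum.inl i :: y :: v)[n + 1]? = some y := by
    rw [List.getElem?_append_right (by omega)]
    have : n + 1 - u.length = 1 := by omega
    rw [this]; simp
  rw [he] at hx hy'
  rw [List.getElem?_append, length_Pj, Pj_getElem?] at hx hy'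
  by_cases h : n < m * (2 * j + 1)
  · rw [if_pos h, if_pos h] at hx
    have hi : i = n % (2 * j + 1) := by
      have := Option.some_injective _ hx; simp at this; omega
    by_cases h2 : n + 1 < m * (2 * j + 1)
    · rw [if_pos h2, if_pos h2] at hy'
      left
      have := (Option.some_injective _ hy').symm
      rw [this]; congr 1
      rw [hi]
      exact ((Nat.mod_modEq n (2*j+1)).add_right 1).symm
    · rw [if_neg h2] at hy'
      rcases ht with rfl | rfl
      · simp at hy'
      · rw [Bw_getElem?] at hy'
        by_cases h4 : n + 1 - m * (2*j+1) < j
        · rw [if_pos h4] at hy'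
          right
          have h5 : n + 1 - m * (2*j+1) = 0 := by omega
          rw [h5] at hy'
          exact ⟨by omega, (Option.some_injective _ hy').symm⟩
        · rw [if_neg h4] at hy'; exact absurd hy' (by simp)
  · rw [if_neg h] at hx
    rcases ht with rfl | rfl
    · simp at hx
    · rw [Bw_getElem?] at hx
      by_cases h2 : n - m * (2*j+1) < j
      · rw [if_pos h2] at hx; simp at hx
      · rw [if_neg h2] at hx; exact absurd hx (by simp)

theorem rchars_Ej (j : ℕ) : (rchars (Ej j)).Nodup := by
  show (rchars (chain (Aw j)) ++ (rchars (.epsilon : RegularExpression (ℕ ⊕ ℕ))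
      ++ rchars (chain (Bw j)))).Nodup
  rw [rchars_chain, rchars_chain]
  show ((Aw j) ++ ([] ++ Bw j)).Nodup
  rw [List.nil_append, List.nodup_append]
  refine ⟨?_, ?_, ?_⟩
  · exact List.nodup_range.map Sum.inl_injective
  · exact List.nodup_range.map Sum.inr_injective
  · intro a ha b hb
    simp only [Aw, Bw, List.mem_map, List.mem_range] at ha hb
    obtain ⟨p, _, rfl⟩ := ha; obtain ⟨q, _, h⟩ := hb
    subst h; simp

theorem length_Bw (j : ℕ) : (Bw j).length = j := by simp [Bw]

theorem die {β : Type*} {j : ℕ} (f : ℕ ⊕ ℕ → β) :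
    ∀ (w : List β) (S : Set (Option (ℕ ⊕ ℕ))),
    (∀ q ∈ S, ∃ i, i < j ∧ j ≤ i + w.length ∧ q = some (Sum.inr i)) →
    (glushkov (Ej j).matches' f).evalFrom S w = ∅ := by
  intro w
  induction w with
  | nil =>
      intro S hS
      rw [NFA.evalFrom_nil]
      rw [Set.eq_empty_iff_forall_notMem]
      intro q hq
      obtain ⟨i, h1, h2, -⟩ := hS q hq
      simp at h2; omega
  | cons b w ih =>
      intro S hS
      have : (glushkov (Ej j).matches' f).evalFrom S (b :: w)
          = (glushkov (Ej j).matches' f).evalFrom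
              ((glushkov (Ej j).matches' f).stepSet S b) w := rfl
      rw [this]
      apply ih
      intro q hq
      rw [NFA.mem_stepSet] at hq
      obtain ⟨t, ht, hstep⟩ := hq
      obtain ⟨i, hij, hjw, rfl⟩ := hS t ht
      obtain ⟨y, hyF, -, rfl⟩ := hstep
      obtain ⟨h1, rfl⟩ := follow_inr hyF
      refine ⟨i + 1, h1, ?_, rfl⟩
      simp at hjw ⊢; omega

theorem unit_ext {u v : List Unit} (h : u.length = v.length) : u = v :=
  calc u = List.replicate u.length () := List.eq_replicate_of_mem (by simp)
    _ = List.replicate v.length () := by rw [h]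
    _ = v := (List.eq_replicate_of_mem (by simp)).symm
/-- For every `j ≥ 0`, `L((a^{2j+1})^*(ε + a^j))` is `(j+1)`-lookahead deterministic. -/
theorem stmt4 : ∀ j : ℕ, IsKLookaheadDet (L4 j) (j + 1) := by
  intro j
  refine ⟨ℕ ⊕ ℕ, Ej j, fun _ => (), rchars_Ej j, ⟨⟨none, rfl⟩, ?_⟩, ?_⟩
  · intro p b q₁ q₂ h₁ h₂ hne w hw
    have hwl : w.length = j := by simpa using hw
    have dieapp : ∀ hj : 0 < j,
        (glushkov (Ej j).matches' (fun _ => ())).evalFrom {some (Sum.inr 0)} w = ∅ := by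
      intro hj
      apply die
      intro q hq
      rw [Set.mem_singleton_iff] at hq
      exact ⟨0, hj, by omega, hq⟩
    match p with
    | none =>
        obtain ⟨y₁, hy₁, -, rfl⟩ := h₁
        obtain ⟨y₂, hy₂, -, rfl⟩ := h₂
        rcases first_char hy₁ with rfl | ⟨hj, rfl⟩
        · rcases first_char hy₂ with rfl | ⟨hj, rfl⟩
          · exact absurd rfl hne
          · exact Or.inr (dieapp hj)
        · exact Or.inl (dieapp hj)
    | some (Sum.inl i) =>
        obtain ⟨y₁, hy₁, -, rfl⟩ := h₁
        obtain ⟨y₂, hy₂, -, rfl⟩ := h₂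
        rcases follow_inl hy₁ with rfl | ⟨hj, rfl⟩
        · rcases follow_inl hy₂ with rfl | ⟨hj, rfl⟩
          · exact absurd rfl hne
          · exact Or.inr (dieapp hj)
        · exact Or.inl (dieapp hj)
    | some (Sum.inr i) =>
        obtain ⟨y₁, hy₁, -, rfl⟩ := h₁
        obtain ⟨y₂, hy₂, -, rfl⟩ := h₂
        obtain ⟨-, rfl⟩ := follow_inr hy₁
        obtain ⟨-, rfl⟩ := follow_inr hy₂
        exact absurd rfl hne
  · ext w
    simp only [L4, Set.mem_setOf_eq]
    constructor
    · rintro ⟨m, hm | hm⟩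
      · refine ⟨Pj j m, memb.2 ⟨m, [], Or.inl rfl, by simp⟩, ?_⟩
        apply unit_ext
        simp [length_Pj, hm]
      · refine ⟨Pj j m ++ Bw j, memb.2 ⟨m, Bw j, Or.inr rfl, rfl⟩, ?_⟩
        apply unit_ext
        simp [length_Pj, length_Bw, hm]
    · rintro ⟨ws, hws, rfl⟩
      obtain ⟨m, t, ht, rfl⟩ := memb.1 hws
      rcases ht with rfl | rfl
      · exact ⟨m, Or.inl (by simp [length_Pj])⟩
      · exact ⟨m, Or.inr (by simp [length_Pj, length_Bw])⟩

end BD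
end

section
/- In a k-lookahead deterministic finite automaton over the unary alphabet {a}, if a state s has two successors q₁ and q₂ (both in δ(s,a)) whose right languages are both infinite, then q₁ = q₂. -/
namespace BD

/-- The right language of a state `q` of `A`. -/
def RightLang {β σ : Type*} (A : NFA β σ) (q : σ) : Set (List β) :=
  {w | (A.evalFrom {q} w ∩ A.accept).Nonempty}

lemma evalFrom_empty' {β σ : Type*} (A : NFA β σ) (w : List β) :
    A.evalFrom ∅ w = ∅ := by
  induction w with
  | nil => rfl
  | cons a w ih =>
    have h : A.stepSet ∅ a = ∅ := by simp [NFA.stepSet]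
    show List.foldl A.stepSet ∅ (a :: w) = ∅
    rw [List.foldl_cons, h]
    exact ih

lemma unit_list_len_inj : Function.Injective (fun w : List Unit => w.length) := by
  intro a b h
  simp only at h
  have ha : a = List.replicate a.length () := by
    apply List.eq_replicate_length.mpr; intro x _; rfl
  have hb : b = List.replicate b.length () := by
    apply List.eq_replicate_length.mpr; intro x _; rfl
  rw [ha, hb, h]

lemma eval_nonempty_of_infinite {σ : Type} (A : NFA Unit σ) (q : σ)
    (hInf : (RightLang A q).Infinite) (m : ℕ) :
    A.evalFrom {q} (List.replicate m ()) ≠ ∅ := by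
  intro hemp
  have himg : ((fun w : List Unit => w.length) '' (RightLang A q)).Infinite :=
    hInf.image (unit_list_len_inj.injOn)
  obtain ⟨n, hn, hmn⟩ := himg.exists_gt m
  obtain ⟨v, hv, hvl⟩ := hn
  have hvrep : v = List.replicate m () ++ List.replicate (n - m) () := by
    rw [← List.replicate_add]
    have : v = List.replicate v.length () := by
      apply List.eq_replicate_length.mpr; intro x _; rfl
    rw [this]
    simp only at hvl
    rw [hvl]
    congr 1
    omega
  have : A.evalFrom {q} v = ∅ := by
    rw [hvrep]
    show List.foldl A.stepSet {q} _ = ∅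
    rw [List.foldl_append]
    have : List.foldl A.stepSet {q} (List.replicate m ()) = (∅ : Set σ) := hemp
    rw [this]
    exact evalFrom_empty' A _
  obtain ⟨x, hx, _⟩ := hv
  rw [this] at hx
  exact hx

/-- In a `k`-lookahead deterministic unary automaton, a state cannot have two distinct
successors both of whose right languages are infinite. -/
theorem stmt5 : ∀ (σ : Type) (A : NFA Unit σ) (k : ℕ) (s q₁ q₂ : σ),
    kLA A k → q₁ ∈ A.step s () → q₂ ∈ A.step s () →
    (RightLang A q₁).Infinite → (RightLang A q₂).Infinite → q₁ = q₂ := by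
  intro σ A k s q₁ q₂ hkLA h1 h2 hI1 hI2
  by_contra hne
  obtain ⟨-, hk⟩ := hkLA
  have := hk s () q₁ q₂ h1 h2 hne (List.replicate (k - 1) ())
    List.length_replicate
  rcases this with h | h
  · exact eval_nonempty_of_infinite A q₁ hI1 (k - 1) h
  · exact eval_nonempty_of_infinite A q₂ hI2 (k - 1) h

end BD
end

section
/- A trimmed k-lookahead deterministic finite automaton over a unary alphabet has at most one non-trivial strongly connected component (orbit). -/
namespace BD

/-- `A` is trimmed: every state is reachable from the start and co-reachable
to a final state. -/
def Trimmed {β σ : Type*} (A : NFA β σ) : Prop :=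
  ∀ q : σ, (∃ w, q ∈ A.evalFrom A.start w) ∧
    (∃ w, (A.evalFrom {q} w ∩ A.accept).Nonempty)

section Aux

variable {σ : Type*} (A : NFA Unit σ)

/-- `rep n` is the unique unary word of length `n`. -/
abbrev rep (n : ℕ) : List Unit := List.replicate n ()

lemma word_eq_rep (w : List Unit) : w = rep w.length := by
  induction w with
  | nil => rfl
  | cons a w ih => simp [rep, List.replicate_succ]; exact ih

lemma evalFrom_append' (S : Set σ) (u v : List Unit) :
    A.evalFrom S (u ++ v) = A.evalFrom (A.evalFrom S u) v :=
  List.foldl_append ..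

lemma evalFrom_biUnion (w : List Unit) (S : Set σ) :
    A.evalFrom S w = ⋃ s ∈ S, A.evalFrom {s} w := by
  induction w generalizing S with
  | nil => simp
  | cons a w ih =>
    show A.evalFrom (A.stepSet S a) w = ⋃ s ∈ S, A.evalFrom (A.stepSet {s} a) w
    calc A.evalFrom (A.stepSet S a) w = ⋃ t ∈ A.stepSet S a, A.evalFrom {t} w := ih _
      _ = ⋃ s ∈ S, ⋃ t ∈ A.step s a, A.evalFrom {t} w := by
          ext x; simp only [Set.mem_iUnion, NFA.mem_stepSet]; tauto
      _ = ⋃ s ∈ S, A.evalFrom (A.stepSet {s} a) w := by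
          refine Set.iUnion₂_congr fun s hs => ?_
          rw [ih, show A.stepSet {s} a = A.step s a by simp [NFA.stepSet]]

lemma evalFrom_empty'_s6 (w : List Unit) : A.evalFrom (∅ : Set σ) w = ∅ := by
  induction w with
  | nil => rfl
  | cons a w ih => show A.evalFrom (A.stepSet ∅ a) w = ∅; rwa [NFA.stepSet_empty]

lemma mem_evalFrom_trans {p q r : σ} {u v : List Unit}
    (hq : q ∈ A.evalFrom {p} u) (hr : r ∈ A.evalFrom {q} v) :
    r ∈ A.evalFrom {p} (u ++ v) := by
  rw [evalFrom_append', evalFrom_biUnion]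
  exact Set.mem_biUnion hq hr

lemma mem_evalFrom_cons {p x : σ} {a : Unit} {w : List Unit} :
    x ∈ A.evalFrom {p} (a :: w) ↔ ∃ s ∈ A.step p a, x ∈ A.evalFrom {s} w := by
  show x ∈ A.evalFrom (A.stepSet {p} a) w ↔ _
  rw [evalFrom_biUnion]
  simp [NFA.stepSet]

/-- A state is live if it can read arbitrarily long words. -/
def Live (q : σ) : Prop := ∀ n, (A.evalFrom {q} (rep n)).Nonempty

lemma empty_mono {q : σ} {n m : ℕ} (h : A.evalFrom {q} (rep n) = ∅) (hnm : n ≤ m) :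
    A.evalFrom {q} (rep m) = ∅ := by
  have : rep m = rep n ++ rep (m - n) := by
    rw [← List.replicate_add]; congr 1; omega
  rw [this, evalFrom_append', h, evalFrom_empty'_s6]

lemma nonempty_mono {q : σ} {n m : ℕ} (h : (A.evalFrom {q} (rep m)).Nonempty)
    (hnm : n ≤ m) : (A.evalFrom {q} (rep n)).Nonempty := by
  by_contra hne
  rw [Set.not_nonempty_iff_eq_empty] at hne
  rw [empty_mono A hne hnm] at h
  exact Set.not_nonempty_empty h

lemma live_of_step {p q : σ} (hq : q ∈ A.step p ()) (hl : Live A q) : Live A p := by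
  intro n
  refine nonempty_mono A (m := n + 1) ?_ (Nat.le_succ n)
  obtain ⟨x, hx⟩ := hl n
  refine ⟨x, ?_⟩
  rw [show rep (n+1) = () :: rep n from rfl, mem_evalFrom_cons]
  exact ⟨q, hq, hx⟩

lemma live_of_reach {p q : σ} {w : List Unit}
    (hq : q ∈ A.evalFrom {p} w) (hl : Live A q) : Live A p := by
  induction w generalizing p with
  | nil => simpa using hq ▸ hl
  | cons a w ih =>
    rw [mem_evalFrom_cons] at hq
    obtain ⟨s, hs, hqs⟩ := hq
    exact live_of_step A hs (ih hqs)

lemma live_succ_exists [Fintype σ] {q : σ} (hl : Live A q) :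
    ∃ s, s ∈ A.step q () ∧ Live A s := by
  by_contra h
  push_neg at h
  have h' : ∀ s : σ, ∃ n, s ∈ A.step q () → A.evalFrom {s} (rep n) = ∅ := by
    intro s
    by_cases hs : s ∈ A.step q ()
    · have := h s hs
      simp only [Live, not_forall, Set.not_nonempty_iff_eq_empty] at this
      obtain ⟨n, hn⟩ := this
      exact ⟨n, fun _ => hn⟩
    · exact ⟨0, fun hc => absurd hc hs⟩
  choose g hg using h'
  set N := Finset.univ.sup g with hN
  have hall : ∀ s ∈ A.step q (), A.evalFrom {s} (rep N) = ∅ := fun s hs =>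
    empty_mono A (hg s hs) (Finset.le_sup (Finset.mem_univ s))
  obtain ⟨x, hx⟩ := hl (N + 1)
  rw [show rep (N+1) = () :: rep N from rfl, mem_evalFrom_cons] at hx
  obtain ⟨s, hs, hxs⟩ := hx
  rw [hall s hs] at hxs
  exact hxs

lemma live_succ_unique {k : ℕ} (hk : kLA A k) {p q₁ q₂ : σ}
    (h₁ : q₁ ∈ A.step p ()) (h₂ : q₂ ∈ A.step p ())
    (hl₁ : Live A q₁) (hl₂ : Live A q₂) : q₁ = q₂ := by
  by_contra hne
  rcases hk.2 p () q₁ q₂ h₁ h₂ hne (rep (k - 1)) (List.length_replicate ..) with h | h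
  · exact Set.not_nonempty_empty (h ▸ hl₁ (k - 1))
  · exact Set.not_nonempty_empty (h ▸ hl₂ (k - 1))

open Classical in
/-- The canonical live successor of a state. -/
noncomputable def nxt (q : σ) : σ :=
  if h : ∃ s, s ∈ A.step q () ∧ Live A s then h.choose else q

lemma nxt_spec [Fintype σ] {q : σ} (hl : Live A q) :
    nxt A q ∈ A.step q () ∧ Live A (nxt A q) := by
  have h := live_succ_exists A hl
  rw [nxt, dif_pos h]
  exact h.choose_spec

lemma nxt_iterate_spec [Fintype σ] {q : σ} (hl : Live A q) (n : ℕ) :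
    (nxt A)^[n] q ∈ A.evalFrom {q} (rep n) ∧ Live A ((nxt A)^[n] q) := by
  induction n generalizing q with
  | zero => exact ⟨rfl, hl⟩
  | succ n ih =>
    obtain ⟨hstep, hlive⟩ := nxt_spec A hl
    obtain ⟨hmem, hlive'⟩ := ih hlive
    rw [Function.iterate_succ_apply]
    refine ⟨?_, hlive'⟩
    rw [show rep (n+1) = () :: rep n from rfl, mem_evalFrom_cons]
    exact ⟨nxt A q, hstep, hmem⟩

lemma eq_nxt_iterate [Fintype σ] {k : ℕ} (hk : kLA A k) {p q : σ} {n : ℕ}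
    (hp : Live A p) (hq : Live A q) (h : q ∈ A.evalFrom {p} (rep n)) :
    q = (nxt A)^[n] p := by
  induction n generalizing p with
  | zero => simpa using h
  | succ n ih =>
    rw [show rep (n+1) = () :: rep n from rfl, mem_evalFrom_cons] at h
    obtain ⟨s, hs, hqs⟩ := h
    have hls : Live A s := live_of_reach A hqs hq
    obtain ⟨hstep, hlive⟩ := nxt_spec A hp
    have : s = nxt A p := live_succ_unique A hk hs hstep hls hlive
    rw [Function.iterate_succ_apply]
    exact this ▸ ih hls hqs

lemma live_of_cycle {p : σ} {c : ℕ} (hc : 1 ≤ c)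
    (h : p ∈ A.evalFrom {p} (rep c)) : Live A p := by
  have hiter : ∀ m, p ∈ A.evalFrom {p} (rep (c * m)) := by
    intro m
    induction m with
    | zero => simp
    | succ m ih =>
      have := mem_evalFrom_trans A ih h
      rwa [← List.replicate_add, show c * m + c = c * (m + 1) by ring] at this
  intro n
  exact nonempty_mono A ⟨p, hiter n⟩ (by nlinarith)

lemma reach_of_iterate [Fintype σ] {p : σ} (hp : Live A p) (n : ℕ) :
    Reach A p ((nxt A)^[n] p) :=
  ⟨rep n, (nxt_iterate_spec A hp n).1⟩

lemma reach_trans {p q r : σ} (h₁ : Reach A p q) (h₂ : Reach A q r) : Reach A p r := by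
  obtain ⟨u, hu⟩ := h₁
  obtain ⟨v, hv⟩ := h₂
  exact ⟨u ++ v, mem_evalFrom_trans A hu hv⟩

lemma reach_refl (p : σ) : Reach A p p := ⟨[], rfl⟩

/-- Key symmetric step: two live states on the `nxt`-path from `i`, one of which lies
on a cycle, are mutually reachable. -/
lemma mutual_reach [Fintype σ] {k : ℕ} (hk : kLA A k) {i p₁ p₂ : σ} {n₁ n₂ c₁ : ℕ}
    (hi : Live A i) (hc : 1 ≤ c₁)
    (h₁ : p₁ = (nxt A)^[n₁] i) (h₂ : p₂ = (nxt A)^[n₂] i)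
    (hcyc : (nxt A)^[c₁] p₁ = p₁) (hle : n₁ ≤ n₂) :
    Reach A p₁ p₂ ∧ Reach A p₂ p₁ := by
  have hl₁ : Live A p₁ := h₁ ▸ (nxt_iterate_spec A hi n₁).2
  have hp₂ : p₂ = (nxt A)^[n₂ - n₁] p₁ := by
    rw [h₂, h₁, ← Function.iterate_add_apply]
    congr 1; omega
  have hl₂ : Live A p₂ := hp₂ ▸ (nxt_iterate_spec A hl₁ (n₂ - n₁)).2
  constructor
  · exact hp₂ ▸ reach_of_iterate A hl₁ (n₂ - n₁)
  · have hcycm : ∀ m, (nxt A)^[c₁ * m] p₁ = p₁ := by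
      intro m
      induction m with
      | zero => simp
      | succ m ih =>
        rw [show c₁ * (m + 1) = c₁ + c₁ * m by ring, Function.iterate_add_apply, ih, hcyc]
    set m := n₂ - n₁
    set d := c₁ * m - m
    have hp₁ : p₁ = (nxt A)^[d] p₂ := by
      rw [hp₂, ← Function.iterate_add_apply]
      rw [show d + m = c₁ * m by have : m ≤ c₁ * m := Nat.le_mul_of_pos_left m hc; omega]
      exact (hcycm m).symm
    exact hp₁ ▸ reach_of_iterate A hl₂ d

end Aux

/-- A trimmed `k`-lookahead deterministic finite automaton over a unary alphabet has
at most one non-trivial orbit (strongly connected component). -/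
theorem stmt6 : ∀ (σ : Type) [Fintype σ] (A : NFA Unit σ) (k : ℕ),
    kLA A k → Trimmed A →
    ∀ O₁ O₂ : Set σ, IsOrbit A O₁ → IsOrbit A O₂ →
      NonTrivial A O₁ → NonTrivial A O₂ → O₁ = O₂ := by
  intro σ _ A k hk htrim O₁ O₂ hO₁ hO₂ hNT₁ hNT₂
  obtain ⟨i, hi⟩ := hk.1
  obtain ⟨r₁, hr₁⟩ := hO₁
  obtain ⟨r₂, hr₂⟩ := hO₂
  obtain ⟨p₁, hp₁O, w₁, hw₁ne, hw₁⟩ := hNT₁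
  obtain ⟨p₂, hp₂O, w₂, hw₂ne, hw₂⟩ := hNT₂
  -- cycles
  rw [word_eq_rep w₁] at hw₁
  rw [word_eq_rep w₂] at hw₂
  set c₁ := w₁.length with hc₁def
  set c₂ := w₂.length with hc₂def
  have hc₁ : 1 ≤ c₁ := List.length_pos_iff.mpr hw₁ne
  have hc₂ : 1 ≤ c₂ := List.length_pos_iff.mpr hw₂ne
  have hl₁ : Live A p₁ := live_of_cycle A hc₁ hw₁
  have hl₂ : Live A p₂ := live_of_cycle A hc₂ hw₂
  -- reachability from start
  obtain ⟨u₁, hu₁⟩ := (htrim p₁).1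
  obtain ⟨u₂, hu₂⟩ := (htrim p₂).1
  rw [hi, word_eq_rep u₁] at hu₁
  rw [hi, word_eq_rep u₂] at hu₂
  have hli : Live A i := live_of_reach A hu₁ hl₁
  have he₁ : p₁ = (nxt A)^[u₁.length] i := eq_nxt_iterate A hk hli hl₁ hu₁
  have he₂ : p₂ = (nxt A)^[u₂.length] i := eq_nxt_iterate A hk hli hl₂ hu₂
  have hcyc₁ : (nxt A)^[c₁] p₁ = p₁ := (eq_nxt_iterate A hk hl₁ hl₁ hw₁).symm
  have hcyc₂ : (nxt A)^[c₂] p₂ = p₂ := (eq_nxt_iterate A hk hl₂ hl₂ hw₂).symm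
  -- mutual reachability of p₁ and p₂
  have hmut : Reach A p₁ p₂ ∧ Reach A p₂ p₁ := by
    rcases le_total u₁.length u₂.length with h | h
    · exact mutual_reach A hk hli hc₁ he₁ he₂ hcyc₁ h
    · exact (mutual_reach A hk hli hc₂ he₂ he₁ hcyc₂ h).symm
  -- conclude orbits are equal
  rw [hr₁] at hp₁O; rw [hr₂] at hp₂O
  obtain ⟨hp₁r, hr₁p⟩ := hp₁O
  obtain ⟨hp₂r, hr₂p⟩ := hp₂O
  have hrr : Reach A r₁ r₂ := reach_trans A hr₁p (reach_trans A hmut.1 hp₂r)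
  have hrr' : Reach A r₂ r₁ := reach_trans A hr₂p (reach_trans A hmut.2 hp₁r)
  rw [hr₁, hr₂]
  ext x
  constructor
  · rintro ⟨hx₁, hx₂⟩
    exact ⟨reach_trans A hx₁ hrr, reach_trans A hrr' hx₂⟩
  · rintro ⟨hx₁, hx₂⟩
    exact ⟨reach_trans A hx₁ hrr', reach_trans A hrr hx₂⟩

end BD
end

section
/- For every positive integer j, the unary language L((a^{2j+1})^*(ε + a^j)) = {ε, a^j, a^{2j+1}, a^{3j+1}, a^{4j+2}, …} is not j-lookahead deterministic. -/
namespace BD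

set_option linter.unusedSectionVars false
set_option linter.unnecessarySimpa false
set_option maxHeartbeats 1000000
open Computability



variable {α : Type*}

/-- Walk in the relation graph. -/
inductive RWalk (r : α → α → Prop) : α → List α → α → Prop
  | nil (x : α) : RWalk r x [] x
  | cons {a b z : α} {l : List α} : r a b → RWalk r b l z → RWalk r a (b :: l) z

namespace RWalk

theorem imp {r s : α → α → Prop} (h : ∀ a b, r a b → s a b) {x l z}
    (hw : RWalk r x l z) : RWalk s x l z := by
  induction hw with
  | nil => exact nil _
  | cons hr _ ih => exact cons (h _ _ hr) ih

theorem append {r : α → α → Prop} {x y z l₁ l₂} (h₁ : RWalk r x l₁ y)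
    (h₂ : RWalk r y l₂ z) : RWalk r x (l₁ ++ l₂) z := by
  induction h₁ with
  | nil => exact h₂
  | cons hr _ ih => exact cons hr (ih h₂)

theorem take {r : α → α → Prop} {x l z} (h : RWalk r x l z) (k : ℕ) :
    ∃ z', RWalk r x (l.take k) z' := by
  induction h generalizing k with
  | nil => exact ⟨_, by simpa using nil _⟩
  | @cons a b z l hr _ ih =>
    cases k with
    | zero => exact ⟨a, nil a⟩
    | succ k => obtain ⟨z', hz'⟩ := ih k; exact ⟨z', cons hr hz'⟩

/-- cut a walk over a union of relations at the first `s`-edge. -/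
theorem cut {r s : α → α → Prop} {x l z}
    (h : RWalk (fun a b => r a b ∨ s a b) x l z) :
    RWalk r x l z ∨ ∃ l₁ y w l₂, l = l₁ ++ w :: l₂ ∧ RWalk r x l₁ y ∧ s y w ∧
      RWalk (fun a b => r a b ∨ s a b) w l₂ z := by
  induction h with
  | nil => exact Or.inl (nil _)
  | @cons a b z l hr hw ih =>
    rcases hr with hr | hs
    · rcases ih with h | ⟨l₁, y, w, l₂, rfl, h₁, h₂, h₃⟩
      · exact Or.inl (cons hr h)
      · exact Or.inr ⟨b :: l₁, y, w, l₂, rfl, cons hr h₁, h₂, h₃⟩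
    · exact Or.inr ⟨[], a, b, l, rfl, nil a, hs, hw⟩

end RWalk

variable {M : Set (List α)}

/-- adjacent pairs of a word of `M` are Follow pairs, walk version -/
theorem mid_walk : ∀ (l : List α) (x : α) (u v : List α),
    u ++ (x :: l) ++ v ∈ M → RWalk (fun a b => b ∈ LFollow M a) x l (l.getLastD x)
  | [], x, u, v, _ => RWalk.nil x
  | b :: l, x, u, v, h => by
    have hb : b ∈ LFollow M x := ⟨u, l ++ v, by simpa using h⟩
    have := mid_walk l b (u ++ [x]) v (by simpa using h)
    rw [List.getLastD_cons]
    exact RWalk.cons hb this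

theorem word_first {x : α} {t : List α} (h : x :: t ∈ M) : x ∈ LFirst M := ⟨t, h⟩

theorem word_last : ∀ (l : List α) (x : α) (u : List α),
    u ++ x :: l ∈ M → l.getLastD x ∈ LLast M
  | [], x, u, h => ⟨u, h⟩
  | b :: l, x, u, h => by
    have := word_last l b (u ++ [x]) (by simpa using h)
    rwa [List.getLastD_cons]

theorem word_pair {w : List α} (hw : w ∈ M) {i : ℕ} (h : i + 1 < w.length) :
    w[i + 1] ∈ LFollow M w[i] := by
  refine ⟨w.take i, w.drop (i + 2), ?_⟩
  have h1 : w.drop i = w[i] :: w.drop (i + 1) := List.drop_eq_getElem_cons (by omega)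
  have h2 : w.drop (i + 1) = w[i + 1] :: w.drop (i + 2) := List.drop_eq_getElem_cons h
  have := w.take_append_drop i
  rw [h1, h2] at this
  simpa using this.symm ▸ hw


variable {α : Type*} {P Q : Language α} {x y : α} {u v : List α}

theorem master_split {w₁ w₂ : List α} (h : w₁ ++ w₂ = u ++ x :: y :: v) :
    (∃ u₂, w₂ = u₂ ++ x :: y :: v ∧ u = w₁ ++ u₂) ∨
    (w₁ = u ++ [x] ∧ w₂ = y :: v) ∨
    (∃ v₁, w₁ = u ++ x :: y :: v₁ ∧ v = v₁ ++ w₂) := by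
  rcases List.append_eq_append_iff.mp h with ⟨a', ha1, ha2⟩ | ⟨c', hc1, hc2⟩
  · exact Or.inl ⟨a', ha2, ha1⟩
  · rcases c' with _ | ⟨p, _ | ⟨r, c₂⟩⟩
    · exact Or.inl ⟨[], by simpa using hc2.symm, by simpa using hc1.symm⟩
    · simp only [List.cons_append, List.nil_append, List.cons.injEq] at hc2
      obtain ⟨rfl, rfl⟩ := hc2
      exact Or.inr (Or.inl ⟨hc1, rfl⟩)
    · simp only [List.cons_append, List.cons.injEq] at hc2
      obtain ⟨rfl, rfl, rfl⟩ := hc2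
      exact Or.inr (Or.inr ⟨c₂, hc1, rfl⟩)

theorem last_split {w₁ w₂ : List α} (h : w₁ ++ w₂ = u ++ [x]) :
    (w₂ = [] ∧ w₁ = u ++ [x]) ∨ (∃ u₂, w₂ = u₂ ++ [x] ∧ u = w₁ ++ u₂) := by
  rcases List.eq_nil_or_concat w₂ with rfl | ⟨l, a, rfl⟩
  · exact Or.inl ⟨rfl, by simpa using h⟩
  · rw [List.concat_eq_append, ← List.append_assoc] at h
    obtain ⟨h1, h2⟩ := List.append_inj' h (by simp)
    simp only [List.cons.injEq] at h2
    exact Or.inr ⟨l, by rw [List.concat_eq_append, h2.1], h1.symm⟩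

theorem first_split {w₁ w₂ : List α} (h : w₁ ++ w₂ = y :: v) :
    (w₁ = [] ∧ w₂ = y :: v) ∨ (∃ v₁, w₁ = y :: v₁ ∧ v = v₁ ++ w₂) := by
  rcases w₁ with _ | ⟨a, t⟩
  · exact Or.inl ⟨rfl, by simpa using h⟩
  · simp only [List.cons_append, List.cons.injEq] at h
    exact Or.inr ⟨t, by rw [h.1], h.2.symm⟩

section comp
variable {A B : α → Prop}
  (hPA : ∀ w ∈ P, ∀ x ∈ w, A x) (hQB : ∀ w ∈ Q, ∀ x ∈ w, B x)
  (disj : ∀ x, A x → B x → False)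

include hPA hQB disj

theorem c1 (h : y ∈ LFirst (P * Q : Language α)) (hy : A y) : y ∈ LFirst P := by
  obtain ⟨w, hw⟩ := h
  replace hw := Language.mem_mul.mp hw
  obtain ⟨w₁, h₁, w₂, h₂, heq⟩ := hw
  rcases first_split heq with ⟨rfl, rfl⟩ | ⟨v₁, rfl, rfl⟩
  · exact absurd hy (fun hy => disj _ hy (hQB _ h₂ _ (by simp)))
  · exact ⟨v₁, h₁⟩

theorem c1' (h : y ∈ LFirst (P * Q : Language α)) (hy : B y) : [] ∈ P ∧ y ∈ LFirst Q := by
  obtain ⟨w, hw⟩ := h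
  replace hw := Language.mem_mul.mp hw
  obtain ⟨w₁, h₁, w₂, h₂, heq⟩ := hw
  rcases first_split heq with ⟨rfl, rfl⟩ | ⟨v₁, rfl, rfl⟩
  · exact ⟨h₁, w, h₂⟩
  · exact absurd hy (fun hy => disj _ (hPA _ h₁ _ (by simp)) hy)

theorem c2 (h : y ∈ LFollow (P * Q : Language α) x) (hx : A x) (hy : A y) :
    y ∈ LFollow P x := by
  obtain ⟨u, v, hw⟩ := h
  replace hw := Language.mem_mul.mp hw
  obtain ⟨w₁, h₁, w₂, h₂, heq⟩ := hw
  rcases master_split heq with ⟨u₂, rfl, rfl⟩ | ⟨rfl, rfl⟩ | ⟨v₁, rfl, rfl⟩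
  · exact absurd hx (fun hx => disj _ hx (hQB _ h₂ _ (by simp)))
  · exact absurd hy (fun hy => disj _ hy (hQB _ h₂ _ (by simp)))
  · exact ⟨u, v₁, h₁⟩

theorem c3 (h : y ∈ LFollow (P * Q : Language α) x) (hx : A x) (hy : B y) :
    x ∈ LLast P ∧ y ∈ LFirst Q := by
  obtain ⟨u, v, hw⟩ := h
  replace hw := Language.mem_mul.mp hw
  obtain ⟨w₁, h₁, w₂, h₂, heq⟩ := hw
  rcases master_split heq with ⟨u₂, rfl, rfl⟩ | ⟨rfl, rfl⟩ | ⟨v₁, rfl, rfl⟩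
  · exact absurd hx (fun hx => disj _ hx (hQB _ h₂ _ (by simp)))
  · exact ⟨⟨u, h₁⟩, ⟨v, h₂⟩⟩
  · exact absurd hy (fun hy => disj _ (hPA _ h₁ _ (by simp)) hy)

theorem c4 (h : y ∈ LFollow (P * Q : Language α) x) (hx : B x) : y ∈ LFollow Q x := by
  obtain ⟨u, v, hw⟩ := h
  replace hw := Language.mem_mul.mp hw
  obtain ⟨w₁, h₁, w₂, h₂, heq⟩ := hw
  rcases master_split heq with ⟨u₂, rfl, rfl⟩ | ⟨rfl, rfl⟩ | ⟨v₁, rfl, rfl⟩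
  · exact ⟨u₂, v, h₂⟩
  · exact absurd hx (fun hx => disj _ (hPA _ h₁ _ (by simp)) hx)
  · exact absurd hx (fun hx => disj _ (hPA _ h₁ _ (by simp)) hx)

theorem c5 (h : x ∈ LLast (P * Q : Language α)) (hx : A x) : x ∈ LLast P ∧ [] ∈ Q := by
  obtain ⟨w, hw⟩ := h
  replace hw := Language.mem_mul.mp hw
  obtain ⟨w₁, h₁, w₂, h₂, heq⟩ := hw
  rcases last_split heq with ⟨rfl, rfl⟩ | ⟨u₂, rfl, rfl⟩
  · exact ⟨⟨w, h₁⟩, h₂⟩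
  · exact absurd hx (fun hx => disj _ hx (hQB _ h₂ _ (by simp)))

theorem c6 (h : x ∈ LLast (P * Q : Language α)) (hx : B x) : x ∈ LLast Q := by
  obtain ⟨w, hw⟩ := h
  replace hw := Language.mem_mul.mp hw
  obtain ⟨w₁, h₁, w₂, h₂, heq⟩ := hw
  rcases last_split heq with ⟨rfl, rfl⟩ | ⟨u₂, rfl, rfl⟩
  · exact absurd hx (fun hx => disj _ (hPA _ (by simpa using h₁) _ (by simp)) hx)
  · exact ⟨u₂, h₂⟩

end comp

section compconv

theorem mul_first_left (h : y ∈ LFirst P) {wq} (hq : wq ∈ Q) : y ∈ LFirst (P * Q : Language α) := by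
  obtain ⟨w, hw⟩ := h
  exact ⟨w ++ wq, by show _ ∈ (P * Q : Language α); simpa using Language.append_mem_mul hw hq⟩

theorem mul_first_eps (h : [] ∈ P) (hy : y ∈ LFirst Q) : y ∈ LFirst (P * Q : Language α) := by
  obtain ⟨w, hw⟩ := hy
  exact ⟨w, by show _ ∈ (P * Q : Language α); simpa using Language.append_mem_mul h hw⟩

theorem mul_follow_left (h : y ∈ LFollow P x) {wq} (hq : wq ∈ Q) :
    y ∈ LFollow (P * Q : Language α) x := by
  obtain ⟨u, v, hw⟩ := h
  exact ⟨u, v ++ wq, by show _ ∈ (P * Q : Language α); simpa using Language.append_mem_mul hw hq⟩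

theorem mul_follow_right (h : y ∈ LFollow Q x) {wp} (hp : wp ∈ P) :
    y ∈ LFollow (P * Q : Language α) x := by
  obtain ⟨u, v, hw⟩ := h
  exact ⟨wp ++ u, v, by show _ ∈ (P * Q : Language α); simpa using Language.append_mem_mul hp hw⟩

theorem mul_last_right (h : x ∈ LLast Q) {wp} (hp : wp ∈ P) :
    x ∈ LLast (P * Q : Language α) := by
  obtain ⟨w, hw⟩ := h
  exact ⟨wp ++ w, by show _ ∈ (P * Q : Language α); simpa using Language.append_mem_mul hp hw⟩

theorem mul_last_eps (h : x ∈ LLast P) (hq : [] ∈ Q) : x ∈ LLast (P * Q : Language α) := by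
  obtain ⟨w, hw⟩ := h
  exact ⟨w, by show _ ∈ (P * Q : Language α); simpa using Language.append_mem_mul hw hq⟩

theorem mul_boundary (h : x ∈ LLast P) (hy : y ∈ LFirst Q) :
    y ∈ LFollow (P * Q : Language α) x := by
  obtain ⟨w, hw⟩ := h
  obtain ⟨w', hw'⟩ := hy
  exact ⟨w, w', by show _ ∈ (P * Q : Language α); simpa using Language.append_mem_mul hw hw'⟩

end compconv

section star

theorem star_mem {w : List α} (h : w ∈ P) : w ∈ (P∗ : Language α) :=
  Language.mem_kstar.mpr ⟨[w], by simp, by simpa⟩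

theorem star_append {a b : List α} (ha : a ∈ P) (hb : b ∈ (P∗ : Language α)) :
    a ++ b ∈ (P∗ : Language α) := by
  obtain ⟨L, rfl, hL⟩ := Language.mem_kstar.mp hb
  refine Language.mem_kstar.mpr ⟨a :: L, by simp, ?_⟩
  intro y hy
  rcases List.mem_cons.mp hy with rfl | hy
  · exact ha
  · exact hL _ hy

theorem s_first_aux : ∀ (L : List (List α)), (∀ p ∈ L, p ∈ P) →
    L.flatten = y :: v → y ∈ LFirst P := by
  intro L
  induction L with
  | nil => intro _ h; simp at h
  | cons h t ih =>
    intro hp heq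
    rw [List.flatten_cons] at heq
    rcases first_split heq with ⟨rfl, h2⟩ | ⟨v₁, rfl, rfl⟩
    · exact ih (fun p hp' => hp p (by simp [hp'])) (by simpa using h2)
    · exact ⟨v₁, hp _ (by simp)⟩

theorem s_first (h : y ∈ LFirst (P∗ : Language α)) : y ∈ LFirst P := by
  obtain ⟨w, hw⟩ := h
  obtain ⟨L, hL, hmem⟩ := Language.mem_kstar.mp hw
  exact s_first_aux L hmem hL.symm

theorem s_last_aux : ∀ (L : List (List α)), (∀ p ∈ L, p ∈ P) →
    L.flatten = u ++ [x] → x ∈ LLast P := by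
  intro L
  induction L generalizing u with
  | nil => intro _ h; simp at h
  | cons h t ih =>
    intro hp heq
    rw [List.flatten_cons] at heq
    rcases last_split heq with ⟨h1, h2⟩ | ⟨u₂, h1, rfl⟩
    · exact ⟨u, h2 ▸ hp _ (by simp)⟩
    · exact ih (fun p hp' => hp p (by simp [hp'])) h1

theorem s_last (h : x ∈ LLast (P∗ : Language α)) : x ∈ LLast P := by
  obtain ⟨w, hw⟩ := h
  obtain ⟨L, hL, hmem⟩ := Language.mem_kstar.mp hw
  exact s_last_aux L hmem hL.symm

theorem s_follow_aux : ∀ (L : List (List α)), (∀ p ∈ L, p ∈ P) →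
    L.flatten = u ++ x :: y :: v → y ∈ LFollow P x ∨ (x ∈ LLast P ∧ y ∈ LFirst P) := by
  intro L
  induction L generalizing u with
  | nil => intro _ h; simp at h
  | cons h t ih =>
    intro hp heq
    rw [List.flatten_cons] at heq
    rcases master_split heq with ⟨u₂, h1, rfl⟩ | ⟨h1, h2⟩ | ⟨v₁, h1, rfl⟩
    · exact ih (fun p hp' => hp p (by simp [hp'])) h1
    · exact Or.inr ⟨⟨u, h1 ▸ hp _ (by simp)⟩,
        s_first_aux t (fun p hp' => hp p (by simp [hp'])) h2⟩
    · exact Or.inl ⟨u, v₁, h1 ▸ hp _ (by simp)⟩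

theorem s_follow (h : y ∈ LFollow (P∗ : Language α) x) :
    y ∈ LFollow P x ∨ (x ∈ LLast P ∧ y ∈ LFirst P) := by
  obtain ⟨u, v, hw⟩ := h
  obtain ⟨L, hL, hmem⟩ := Language.mem_kstar.mp hw
  exact s_follow_aux L hmem hL.symm

theorem star_follow (h : y ∈ LFollow P x) : y ∈ LFollow (P∗ : Language α) x := by
  obtain ⟨u, v, hw⟩ := h
  exact ⟨u, v, star_mem hw⟩

theorem star_boundary (h : x ∈ LLast P) (hy : y ∈ LFirst P) :
    y ∈ LFollow (P∗ : Language α) x := by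
  obtain ⟨w, hw⟩ := h
  obtain ⟨w', hw'⟩ := hy
  exact ⟨w, w', by show _ ∈ (P∗ : Language α); simpa using star_append hw (star_mem hw')⟩

theorem star_first (h : y ∈ LFirst P) : y ∈ LFirst (P∗ : Language α) := by
  obtain ⟨w, hw⟩ := h; exact ⟨w, star_mem hw⟩

theorem star_last (h : x ∈ LLast P) : x ∈ LLast (P∗ : Language α) := by
  obtain ⟨w, hw⟩ := h; exact ⟨w, star_mem hw⟩

end star

section plus

theorem p_first (h : y ∈ LFirst (P + Q : Language α)) : y ∈ LFirst P ∨ y ∈ LFirst Q := by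
  obtain ⟨w, hw⟩ := h
  rcases (Language.mem_add _ _ _).mp hw with h | h
  · exact Or.inl ⟨w, h⟩
  · exact Or.inr ⟨w, h⟩

theorem p_last (h : x ∈ LLast (P + Q : Language α)) : x ∈ LLast P ∨ x ∈ LLast Q := by
  obtain ⟨w, hw⟩ := h
  rcases (Language.mem_add _ _ _).mp hw with h | h
  · exact Or.inl ⟨w, h⟩
  · exact Or.inr ⟨w, h⟩

theorem p_follow (h : y ∈ LFollow (P + Q : Language α) x) :
    y ∈ LFollow P x ∨ y ∈ LFollow Q x := by
  obtain ⟨u, v, hw⟩ := h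
  rcases (Language.mem_add _ _ _).mp hw with h | h
  · exact Or.inl ⟨u, v, h⟩
  · exact Or.inr ⟨u, v, h⟩

theorem p_first_l (h : y ∈ LFirst P) : y ∈ LFirst (P + Q : Language α) := by
  obtain ⟨w, hw⟩ := h; exact ⟨w, (Language.mem_add _ _ _).mpr (Or.inl hw)⟩
theorem p_first_r (h : y ∈ LFirst Q) : y ∈ LFirst (P + Q : Language α) := by
  obtain ⟨w, hw⟩ := h; exact ⟨w, (Language.mem_add _ _ _).mpr (Or.inr hw)⟩
theorem p_last_l (h : x ∈ LLast P) : x ∈ LLast (P + Q : Language α) := by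
  obtain ⟨w, hw⟩ := h; exact ⟨w, (Language.mem_add _ _ _).mpr (Or.inl hw)⟩
theorem p_last_r (h : x ∈ LLast Q) : x ∈ LLast (P + Q : Language α) := by
  obtain ⟨w, hw⟩ := h; exact ⟨w, (Language.mem_add _ _ _).mpr (Or.inr hw)⟩
theorem p_follow_l (h : y ∈ LFollow P x) : y ∈ LFollow (P + Q : Language α) x := by
  obtain ⟨u, v, hw⟩ := h; exact ⟨u, v, (Language.mem_add _ _ _).mpr (Or.inl hw)⟩
theorem p_follow_r (h : y ∈ LFollow Q x) : y ∈ LFollow (P + Q : Language α) x := by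
  obtain ⟨u, v, hw⟩ := h; exact ⟨u, v, (Language.mem_add _ _ _).mpr (Or.inr hw)⟩

end plus


theorem walk_side {r1 r2 : α → α → Prop} {A' : α → Prop}
    (hedge : ∀ a b, A' a → r1 a b → r2 a b ∧ A' b) {x l z} (hx : A' x)
    (h : RWalk r1 x l z) : RWalk r2 x l z ∧ A' z := by
  induction h with
  | nil => exact ⟨RWalk.nil _, hx⟩
  | @cons a b z' l hr hw ih =>
    obtain ⟨h2, hb⟩ := hedge _ _ hx hr
    obtain ⟨hw2, hz⟩ := ih hb
    exact ⟨RWalk.cons h2 hw2, hz⟩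

theorem mem_rchars : ∀ (E : RegularExpression α) {w}, w ∈ E.matches' → ∀ x ∈ w, x ∈ rchars E := by
  intro E
  induction E with
  | zero => intro w hw; simp [RegularExpression.matches'_zero] at hw
  | epsilon =>
    intro w hw
    have : w ∈ (1 : Language α) := hw
    rw [Language.mem_one] at this
    subst this; simp
  | char a =>
    intro w hw x hx
    have : w ∈ ({[a]} : Language α) := hw
    replace this := Set.mem_singleton_iff.mp this
    subst this; simpa [rchars] using hx
  | plus P Q ihP ihQ =>
    intro w hw x hx
    have hw' : w ∈ P.matches' + Q.matches' := hw
    rcases (Language.mem_add _ _ _).mp hw' with h | h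
    · show x ∈ rchars P ++ rchars Q
      exact List.mem_append_left _ (ihP h x hx)
    · show x ∈ rchars P ++ rchars Q
      exact List.mem_append_right _ (ihQ h x hx)
  | comp P Q ihP ihQ =>
    intro w hw x hx
    have hw' : w ∈ P.matches' * Q.matches' := hw
    replace hw' := Language.mem_mul.mp hw'
    obtain ⟨a, ha, b, hb, rfl⟩ := hw'
    rcases List.mem_append.mp hx with h | h
    · show x ∈ rchars P ++ rchars Q
      exact List.mem_append_left _ (ihP ha x h)
    · show x ∈ rchars P ++ rchars Q
      exact List.mem_append_right _ (ihQ hb x h)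
  | star P ihP =>
    intro w hw x hx
    have hw' : w ∈ P.matches'∗ := hw
    obtain ⟨L, rfl, hL⟩ := Language.mem_kstar.mp hw'
    obtain ⟨p, hp, hxp⟩ := List.mem_flatten.mp hx
    show x ∈ rchars P
    exact ihP (hL p hp) x hxp


section locality
variable {α : Type*}

theorem locality : ∀ (E : RegularExpression α), (rchars E).Nodup →
    ∀ x l z, x ∈ LFirst E.matches' →
      RWalk (fun a b => b ∈ LFollow E.matches' a) x l z →
      z ∈ LLast E.matches' → x :: l ∈ E.matches' := by
  intro E
  induction E with
  | zero =>
    intro _ x l z hx _ _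
    obtain ⟨w, hw⟩ := hx
    exact absurd hw (Language.notMem_zero _)
  | epsilon =>
    intro _ x l z hx _ _
    obtain ⟨w, hw⟩ := hx
    have : x :: w ∈ (1 : Language α) := hw
    rw [Language.mem_one] at this
    simp at this
  | char a =>
    intro _ x l z hx hw _
    obtain ⟨w, hw0⟩ := hx
    have hx' : x :: w ∈ ({[a]} : Language α) := hw0
    replace hx' := Set.mem_singleton_iff.mp hx'
    simp only [List.cons.injEq] at hx'
    obtain ⟨rfl, rfl⟩ := hx'
    cases hw with
    | nil => exact rfl
    | cons hr _ =>
      obtain ⟨u, v, huv⟩ := hr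
      have huv' : u ++ x :: _ :: v ∈ ({[x]} : Language α) := huv
      replace huv' := Set.mem_singleton_iff.mp huv'
      have := congrArg List.length huv'
      simp at this
      omega
  | plus P Q ihP ihQ =>
    intro hnd x l z hx hw hz
    have hndP : (rchars P).Nodup := (List.nodup_append'.mp hnd).1
    have hndQ : (rchars Q).Nodup := (List.nodup_append'.mp hnd).2.1
    have hdisj : (rchars P).Disjoint (rchars Q) := (List.nodup_append'.mp hnd).2.2
    have hPA : ∀ w ∈ P.matches', ∀ y ∈ w, y ∈ rchars P := fun w hw => mem_rchars P hw
    have hQB : ∀ w ∈ Q.matches', ∀ y ∈ w, y ∈ rchars Q := fun w hw => mem_rchars Q hw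
    have hM : (P.plus Q).matches' = P.matches' + Q.matches' := rfl
    rw [hM] at hx hw hz ⊢
    have hedgeP : ∀ a b, a ∈ rchars P → b ∈ LFollow (P.matches' + Q.matches') a →
        b ∈ LFollow P.matches' a ∧ b ∈ rchars P := by
      intro a b ha hab
      rcases p_follow hab with h | h
      · obtain ⟨u, v, huv⟩ := id h
        exact ⟨h, hPA _ huv b (by simp)⟩
      · obtain ⟨u, v, huv⟩ := h
        exact absurd (hQB _ huv a (by simp)) (fun hc => hdisj ha hc)
    have hedgeQ : ∀ a b, a ∈ rchars Q → b ∈ LFollow (P.matches' + Q.matches') a →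
        b ∈ LFollow Q.matches' a ∧ b ∈ rchars Q := by
      intro a b ha hab
      rcases p_follow hab with h | h
      · obtain ⟨u, v, huv⟩ := h
        exact absurd ha (fun hc => hdisj (hPA _ huv a (by simp)) hc)
      · obtain ⟨u, v, huv⟩ := id h
        exact ⟨h, hQB _ huv b (by simp)⟩
    rcases p_first hx with hx1 | hx1
    · have hxA : x ∈ rchars P := by
        obtain ⟨w, hw'⟩ := hx1; exact hPA _ hw' x (by simp)
      obtain ⟨hw2, hzA⟩ := walk_side hedgeP hxA hw
      have hz2 : z ∈ LLast P.matches' := by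
        rcases p_last hz with h | h
        · exact h
        · obtain ⟨w, hw'⟩ := h
          exact absurd (hQB _ hw' z (by simp)) (fun hc => hdisj hzA hc)
      exact (Language.mem_add _ _ _).mpr (Or.inl (ihP hndP x l z hx1 hw2 hz2))
    · have hxB : x ∈ rchars Q := by
        obtain ⟨w, hw'⟩ := hx1; exact hQB _ hw' x (by simp)
      obtain ⟨hw2, hzB⟩ := walk_side hedgeQ hxB hw
      have hz2 : z ∈ LLast Q.matches' := by
        rcases p_last hz with h | h
        · obtain ⟨w, hw'⟩ := h
          exact absurd (hPA _ hw' z (by simp)) (fun hc => hdisj hc hzB)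
        · exact h
      exact (Language.mem_add _ _ _).mpr (Or.inr (ihQ hndQ x l z hx1 hw2 hz2))
  | comp P Q ihP ihQ =>
    intro hnd x l z hx hw hz
    have hndP : (rchars P).Nodup := (List.nodup_append'.mp hnd).1
    have hndQ : (rchars Q).Nodup := (List.nodup_append'.mp hnd).2.1
    have hdisj : (rchars P).Disjoint (rchars Q) := (List.nodup_append'.mp hnd).2.2
    have hPA : ∀ w ∈ P.matches', ∀ y ∈ w, y ∈ rchars P := fun w hw => mem_rchars P hw
    have hQB : ∀ w ∈ Q.matches', ∀ y ∈ w, y ∈ rchars Q := fun w hw => mem_rchars Q hw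
    have disj : ∀ y, y ∈ rchars P → y ∈ rchars Q → False := fun y h1 h2 => hdisj h1 h2
    have hM : (P.comp Q).matches' = P.matches' * Q.matches' := rfl
    rw [hM] at hx hw hz ⊢
    set Pm := P.matches' with hPm
    set Qm := Q.matches' with hQm
    -- every symbol with an occurrence is in rchars P ++ rchars Q
    have hsideF : ∀ a b, b ∈ LFollow (Pm * Qm) a → b ∈ rchars P ∨ b ∈ rchars Q := by
      intro a b h
      obtain ⟨u, v, huv⟩ := h
      replace huv := Language.mem_mul.mp huv
      obtain ⟨w₁, h₁, w₂, h₂, heq⟩ := huv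
      have : b ∈ w₁ ++ w₂ := by rw [heq]; simp
      rcases List.mem_append.mp this with h | h
      · exact Or.inl (hPA _ h₁ b h)
      · exact Or.inr (hQB _ h₂ b h)
    have hedgeQ : ∀ a b, a ∈ rchars Q → b ∈ LFollow (Pm * Qm) a →
        b ∈ LFollow Qm a ∧ b ∈ rchars Q := by
      intro a b ha hab
      have := c4 hPA hQB disj hab ha
      obtain ⟨u, v, huv⟩ := this
      exact ⟨⟨u, v, huv⟩, hQB _ huv b (by simp)⟩
    by_cases hxA : x ∈ rchars P
    · -- cut the walk
      have hw' : RWalk (fun a b => (b ∈ LFollow (Pm * Qm) a ∧ b ∈ rchars P) ∨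
          (b ∈ LFollow (Pm * Qm) a ∧ b ∈ rchars Q)) x l z := by
        refine hw.imp ?_
        intro a b hab
        rcases hsideF a b hab with h | h
        · exact Or.inl ⟨hab, h⟩
        · exact Or.inr ⟨hab, h⟩
      have hedgeP : ∀ a b, a ∈ rchars P →
          (b ∈ LFollow (Pm * Qm) a ∧ b ∈ rchars P) →
          b ∈ LFollow Pm a ∧ b ∈ rchars P := by
        intro a b ha ⟨hab, hb⟩
        exact ⟨c2 hPA hQB disj hab ha hb, hb⟩
      rcases hw'.cut with hpure | ⟨l₁, y, w, l₂, rfl, h₁, hs, h₃⟩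
      · obtain ⟨hw2, hzA⟩ := walk_side hedgeP hxA hpure
        have hx2 : x ∈ LFirst Pm := c1 hPA hQB disj hx hxA
        obtain ⟨hz2, hepsQ⟩ := c5 hPA hQB disj hz hzA
        have := ihP hndP x l z hx2 hw2 hz2
        simpa using Language.append_mem_mul this hepsQ
      · obtain ⟨hw2, hyA⟩ := walk_side hedgeP hxA h₁
        obtain ⟨hyL, hwF⟩ := c3 hPA hQB disj hs.1 hyA hs.2
        have hx2 : x ∈ LFirst Pm := c1 hPA hQB disj hx hxA
        have hpre : x :: l₁ ∈ Pm := ihP hndP x l₁ y hx2 hw2 hyL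
        have h₃' : RWalk (fun a b => b ∈ LFollow (Pm * Qm) a) w l₂ z :=
          h₃.imp (fun a b hab => by rcases hab with h | h
                                    exacts [h.1, h.1])
        obtain ⟨hw3, hzB⟩ := walk_side hedgeQ hs.2 h₃'
        have hz2 : z ∈ LLast Qm := c6 hPA hQB disj hz hzB
        have hsuf : w :: l₂ ∈ Qm := ihQ hndQ w l₂ z hwF hw3 hz2
        have := Language.append_mem_mul hpre hsuf
        simpa using this
    · -- x on the Q side
      have hxB : x ∈ rchars Q := by
        obtain ⟨w, hw'⟩ := hx
        replace hw' := Language.mem_mul.mp hw'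
        obtain ⟨w₁, h₁, w₂, h₂, heq⟩ := hw'
        have : x ∈ w₁ ++ w₂ := by rw [heq]; simp
        rcases List.mem_append.mp this with h | h
        · exact absurd (hPA _ h₁ x h) hxA
        · exact hQB _ h₂ x h
      obtain ⟨hepsP, hx2⟩ := c1' hPA hQB disj hx hxB
      obtain ⟨hw2, hzB⟩ := walk_side hedgeQ hxB hw
      have hz2 : z ∈ LLast Qm := c6 hPA hQB disj hz hzB
      have := ihQ hndQ x l z hx2 hw2 hz2
      simpa using Language.append_mem_mul hepsP this
  | star P ihP =>
    intro hnd x l z hx hw hz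
    have hndP : (rchars P).Nodup := hnd
    have hM : (P.star).matches' = P.matches'∗ := rfl
    rw [hM] at hx hw hz ⊢
    set Pm := P.matches' with hPm
    have key : ∀ n, ∀ (l : List α) x z, l.length ≤ n → x ∈ LFirst Pm →
        RWalk (fun a b => b ∈ LFollow Pm a ∨ (a ∈ LLast Pm ∧ b ∈ LFirst Pm)) x l z →
        z ∈ LLast Pm → x :: l ∈ (Pm∗ : Language α) := by
      intro n
      induction n with
      | zero =>
        intro l x z hl hx hw hz
        have hl' : l = [] := List.eq_nil_of_length_eq_zero (Nat.le_zero.mp hl)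
        · subst hl'
          cases hw with
          | nil => exact star_mem (ihP hndP x [] x hx (RWalk.nil x) hz)
      | succ n ih =>
        intro l x z hl hx hw hz
        rcases hw.cut with hpure | ⟨l₁, y, w, l₂, rfl, h₁, hs, h₃⟩
        · exact star_mem (ihP hndP x l z hx hpure hz)
        · have hpre : x :: l₁ ∈ Pm := ihP hndP x l₁ y hx h₁ hs.1
          have hlen : l₂.length ≤ n := by
            have := congrArg List.length (rfl : l₁ ++ w :: l₂ = l₁ ++ w :: l₂)
            simp at hl
            omega
          have hsuf : w :: l₂ ∈ (Pm∗ : Language α) := ih l₂ w z hlen hs.2 h₃ hz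
          have := star_append hpre hsuf
          simpa using this
    have hw' : RWalk (fun a b => b ∈ LFollow Pm a ∨ (a ∈ LLast Pm ∧ b ∈ LFirst Pm)) x l z :=
      hw.imp (fun a b hab => s_follow hab)
    exact key l.length l x z le_rfl (s_first hx) hw' (s_last hz)

end locality

section gate

variable {α : Type*}

def SR (M : Set (List α)) (x y : α) : Prop :=
  ∃ l, RWalk (fun a b => b ∈ LFollow M a) x l y

theorem SR.rfl {M : Set (List α)} {x : α} : SR M x x := ⟨[], RWalk.nil x⟩

theorem SR.trans {M : Set (List α)} {x y z : α} (h1 : SR M x y) (h2 : SR M y z) :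
    SR M x z := by
  obtain ⟨l1, h1⟩ := h1; obtain ⟨l2, h2⟩ := h2; exact ⟨l1 ++ l2, h1.append h2⟩

theorem SR.single {M : Set (List α)} {x y : α} (h : y ∈ LFollow M x) : SR M x y :=
  ⟨[y], RWalk.cons h (RWalk.nil y)⟩

theorem SR.mono {M N : Set (List α)} (h : ∀ a b, b ∈ LFollow M a → b ∈ LFollow N a)
    {x y : α} (hxy : SR M x y) : SR N x y := by
  obtain ⟨l, hl⟩ := hxy; exact ⟨l, hl.imp h⟩

theorem walk_to_mem {r : α → α → Prop} :
    ∀ (l₁ : List α) {x z y : α} {l l₂ : List α}, RWalk r x l z → l = l₁ ++ y :: l₂ →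
      RWalk r x (l₁ ++ [y]) y := by
  intro l₁
  induction l₁ with
  | nil =>
    intro x z y l l₂ hw heq
    subst heq
    cases hw with
    | cons hr _ => exact RWalk.cons hr (RWalk.nil y)
  | cons a t ih =>
    intro x z y l l₂ hw heq
    subst heq
    cases hw with
    | cons hr hw' => exact RWalk.cons hr (ih hw' rfl)

/-- from a word of `M` containing `u`, a walk from `u` to the final letter. -/
theorem reach_tail {M : Set (List α)} {w : List α} (hw : w ∈ M) {u : α} (hu : u ∈ w) :
    ∃ zl, SR M u zl ∧ zl ∈ LLast M := by
  obtain ⟨f₁, f₂, rfl⟩ := List.append_of_mem hu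
  refine ⟨f₂.getLastD u, ⟨f₂, mid_walk f₂ u f₁ [] (by simpa using hw)⟩, ?_⟩
  exact word_last f₂ u f₁ hw

/-- from the head of a word of `M`, a walk to any member `u`. -/
theorem reach_head {M : Set (List α)} {w : List α} (hw : w ∈ M) {u : α} (hu : u ∈ w) :
    ∃ h, h ∈ LFirst M ∧ SR M h u := by
  obtain ⟨c, rest, rfl⟩ := List.exists_cons_of_ne_nil (List.ne_nil_of_mem hu)
  refine ⟨c, ⟨rest, hw⟩, ?_⟩
  rcases List.mem_cons.mp hu with rfl | hu'
  · exact SR.rfl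
  · obtain ⟨l₁, l₂, rfl⟩ := List.append_of_mem hu'
    exact ⟨l₁ ++ [u], walk_to_mem l₁ (mid_walk (l₁ ++ u :: l₂) c [] [] (by simpa using hw)) rfl⟩

theorem gate : ∀ (E : RegularExpression α), (rchars E).Nodup →
    ∀ z₀ : α,
    (∃ lc, lc ≠ ([] : List α) ∧ RWalk (fun a b => b ∈ LFollow E.matches' a) z₀ lc z₀) →
    ∀ x g : α,
      (SR E.matches' x z₀ ∧ SR E.matches' z₀ x) →
      (x ∈ LLast E.matches' ∨
        ∃ v, ¬(SR E.matches' v z₀ ∧ SR E.matches' z₀ v) ∧ v ∈ LFollow E.matches' x) →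
      (SR E.matches' g z₀ ∧ SR E.matches' z₀ g) →
      (g ∈ LFirst E.matches' ∨
        ∃ u, ¬(SR E.matches' u z₀ ∧ SR E.matches' z₀ u) ∧ g ∈ LFollow E.matches' u) →
      g ∈ LFollow E.matches' x := by
  intro E
  induction E with
  | zero =>
    intro _ z₀ hcyc x g _ _ _ _
    obtain ⟨lc, hne, hw⟩ := hcyc
    cases hw with
    | nil => exact absurd rfl hne
    | cons hr _ =>
      obtain ⟨u, v, huv⟩ := hr
      exact absurd huv (Language.notMem_zero _)
  | epsilon =>
    intro _ z₀ hcyc x g _ _ _ _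
    obtain ⟨lc, hne, hw⟩ := hcyc
    cases hw with
    | nil => exact absurd rfl hne
    | cons hr _ =>
      obtain ⟨u, v, huv⟩ := hr
      have : u ++ _ ∈ (1 : Language α) := huv
      rw [Language.mem_one] at this
      simp at this
  | char a =>
    intro _ z₀ hcyc x g _ _ _ _
    obtain ⟨lc, hne, hw⟩ := hcyc
    cases hw with
    | nil => exact absurd rfl hne
    | cons hr _ =>
      obtain ⟨u, v, huv⟩ := hr
      have : u ++ _ ∈ ({[a]} : Language α) := huv
      replace this := Set.mem_singleton_iff.mp this
      have := congrArg List.length this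
      simp at this
      omega
  | plus P Q ihP ihQ =>
    intro hnd z₀ hcyc x g hxo hxout hgo hgin
    have hndP : (rchars P).Nodup := (List.nodup_append'.mp hnd).1
    have hndQ : (rchars Q).Nodup := (List.nodup_append'.mp hnd).2.1
    have hdisj : (rchars P).Disjoint (rchars Q) := (List.nodup_append'.mp hnd).2.2
    have hPA : ∀ w ∈ P.matches', ∀ y ∈ w, y ∈ rchars P := fun w hw => mem_rchars P hw
    have hQB : ∀ w ∈ Q.matches', ∀ y ∈ w, y ∈ rchars Q := fun w hw => mem_rchars Q hw
    have hM : (P.plus Q).matches' = P.matches' + Q.matches' := rfl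
    rw [hM] at hcyc hxo hxout hgo hgin ⊢
    set Pm := P.matches'
    set Qm := Q.matches'
    have hedgeP : ∀ a b, a ∈ rchars P → b ∈ LFollow (Pm + Qm) a →
        b ∈ LFollow Pm a ∧ b ∈ rchars P := by
      intro a b ha hab
      rcases p_follow hab with h | h
      · obtain ⟨u, v, huv⟩ := id h
        exact ⟨h, hPA _ huv b (by simp)⟩
      · obtain ⟨u, v, huv⟩ := id h
        exact absurd (hQB _ huv a (by simp)) (fun hc => hdisj ha hc)
    have hedgeQ : ∀ a b, a ∈ rchars Q → b ∈ LFollow (Pm + Qm) a →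
        b ∈ LFollow Qm a ∧ b ∈ rchars Q := by
      intro a b ha hab
      rcases p_follow hab with h | h
      · obtain ⟨u, v, huv⟩ := id h
        exact absurd ha (fun hc => hdisj (hPA _ huv a (by simp)) hc)
      · obtain ⟨u, v, huv⟩ := id h
        exact ⟨h, hQB _ huv b (by simp)⟩
    obtain ⟨lc, hlcne, hlcw⟩ := hcyc
    -- z₀ has an outgoing edge, so it occurs in a word; find its side
    have hz₀occ : z₀ ∈ rchars P ∨ z₀ ∈ rchars Q := by
      cases hlcw with
      | nil => exact absurd rfl hlcne
      | cons hr _ =>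
        rcases p_follow hr with h | h
        · obtain ⟨u, v, huv⟩ := h
          exact Or.inl (hPA _ huv z₀ (by simp))
        · obtain ⟨u, v, huv⟩ := h
          exact Or.inr (hQB _ huv z₀ (by simp))
    rcases hz₀occ with hz₀ | hz₀
    · -- everything happens on the P side
      have hSRP : ∀ {a b : α}, a ∈ rchars P → SR (Pm + Qm) a b → SR Pm a b ∧ b ∈ rchars P := by
        intro a b ha ⟨l, hl⟩
        obtain ⟨hw2, hb⟩ := walk_side hedgeP ha hl
        exact ⟨⟨l, hw2⟩, hb⟩
      have hSRM : ∀ {a b : α}, SR Pm a b → SR (Pm + Qm) a b :=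
        fun h => h.mono (fun a b => p_follow_l)
      have hxP : x ∈ rchars P := (hSRP hz₀ hxo.2).2
      have hgP : g ∈ rchars P := (hSRP hz₀ hgo.2).2
      have hmut : ∀ {a : α}, a ∈ rchars P →
          ((SR Pm a z₀ ∧ SR Pm z₀ a) ↔ (SR (Pm + Qm) a z₀ ∧ SR (Pm + Qm) z₀ a)) := by
        intro a ha
        constructor
        · rintro ⟨h1, h2⟩; exact ⟨hSRM h1, hSRM h2⟩
        · rintro ⟨h1, h2⟩; exact ⟨(hSRP ha h1).1, (hSRP hz₀ h2).1⟩
      have hcycP : ∃ lc, lc ≠ ([] : List α) ∧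
          RWalk (fun a b => b ∈ LFollow Pm a) z₀ lc z₀ :=
        ⟨lc, hlcne, (walk_side hedgeP hz₀ hlcw).1⟩
      have hxoP : SR Pm x z₀ ∧ SR Pm z₀ x := (hmut hxP).mpr hxo
      have hgoP : SR Pm g z₀ ∧ SR Pm z₀ g := (hmut hgP).mpr hgo
      have hxoutP : x ∈ LLast Pm ∨
          ∃ v, ¬(SR Pm v z₀ ∧ SR Pm z₀ v) ∧ v ∈ LFollow Pm x := by
        rcases hxout with h | ⟨v, hv1, hv2⟩
        · rcases p_last h with h | h
          · exact Or.inl h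
          · obtain ⟨w, hw'⟩ := h
            exact absurd (hQB _ hw' x (by simp)) (fun hc => hdisj hxP hc)
        · obtain ⟨hv2', hvP⟩ := hedgeP _ _ hxP hv2
          refine Or.inr ⟨v, ?_, hv2'⟩
          intro hc
          exact hv1 ((hmut hvP).mp hc)
      have hginP : g ∈ LFirst Pm ∨
          ∃ u, ¬(SR Pm u z₀ ∧ SR Pm z₀ u) ∧ g ∈ LFollow Pm u := by
        rcases hgin with h | ⟨u, hu1, hu2⟩
        · rcases p_first h with h | h
          · exact Or.inl h
          · obtain ⟨w, hw'⟩ := h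
            exact absurd (hQB _ hw' g (by simp)) (fun hc => hdisj hgP hc)
        · -- u's side
          obtain ⟨uu, vv, huv⟩ := id hu2
          rcases p_follow hu2 with h | h
          · obtain ⟨u1, v1, huv1⟩ := id h
            have huP : u ∈ rchars P := hPA _ huv1 u (by simp)
            refine Or.inr ⟨u, ?_, h⟩
            intro hc
            exact hu1 ((hmut huP).mp hc)
          · obtain ⟨u1, v1, huv1⟩ := h
            exact absurd (hQB _ huv1 g (by simp)) (fun hc => hdisj hgP hc)
      exact p_follow_l (ihP hndP z₀ hcycP x g hxoP hxoutP hgoP hginP)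
    · -- symmetric: Q side
      have hSRQ : ∀ {a b : α}, a ∈ rchars Q → SR (Pm + Qm) a b → SR Qm a b ∧ b ∈ rchars Q := by
        intro a b ha ⟨l, hl⟩
        obtain ⟨hw2, hb⟩ := walk_side hedgeQ ha hl
        exact ⟨⟨l, hw2⟩, hb⟩
      have hSRM : ∀ {a b : α}, SR Qm a b → SR (Pm + Qm) a b :=
        fun h => h.mono (fun a b => p_follow_r)
      have hxQ : x ∈ rchars Q := (hSRQ hz₀ hxo.2).2
      have hgQ : g ∈ rchars Q := (hSRQ hz₀ hgo.2).2
      have hmut : ∀ {a : α}, a ∈ rchars Q →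
          ((SR Qm a z₀ ∧ SR Qm z₀ a) ↔ (SR (Pm + Qm) a z₀ ∧ SR (Pm + Qm) z₀ a)) := by
        intro a ha
        constructor
        · rintro ⟨h1, h2⟩; exact ⟨hSRM h1, hSRM h2⟩
        · rintro ⟨h1, h2⟩; exact ⟨(hSRQ ha h1).1, (hSRQ hz₀ h2).1⟩
      have hcycQ : ∃ lc, lc ≠ ([] : List α) ∧
          RWalk (fun a b => b ∈ LFollow Qm a) z₀ lc z₀ :=
        ⟨lc, hlcne, (walk_side hedgeQ hz₀ hlcw).1⟩
      have hxoQ : SR Qm x z₀ ∧ SR Qm z₀ x := (hmut hxQ).mpr hxo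
      have hgoQ : SR Qm g z₀ ∧ SR Qm z₀ g := (hmut hgQ).mpr hgo
      have hxoutQ : x ∈ LLast Qm ∨
          ∃ v, ¬(SR Qm v z₀ ∧ SR Qm z₀ v) ∧ v ∈ LFollow Qm x := by
        rcases hxout with h | ⟨v, hv1, hv2⟩
        · rcases p_last h with h | h
          · obtain ⟨w, hw'⟩ := h
            exact absurd (hPA _ hw' x (by simp)) (fun hc => hdisj hc hxQ)
          · exact Or.inl h
        · obtain ⟨hv2', hvQ⟩ := hedgeQ _ _ hxQ hv2
          refine Or.inr ⟨v, ?_, hv2'⟩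
          intro hc
          exact hv1 ((hmut hvQ).mp hc)
      have hginQ : g ∈ LFirst Qm ∨
          ∃ u, ¬(SR Qm u z₀ ∧ SR Qm z₀ u) ∧ g ∈ LFollow Qm u := by
        rcases hgin with h | ⟨u, hu1, hu2⟩
        · rcases p_first h with h | h
          · obtain ⟨w, hw'⟩ := h
            exact absurd (hPA _ hw' g (by simp)) (fun hc => hdisj hc hgQ)
          · exact Or.inl h
        · rcases p_follow hu2 with h | h
          · obtain ⟨u1, v1, huv1⟩ := h
            exact absurd (hPA _ huv1 g (by simp)) (fun hc => hdisj hc hgQ)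
          · obtain ⟨u1, v1, huv1⟩ := id h
            have huQ : u ∈ rchars Q := hQB _ huv1 u (by simp)
            refine Or.inr ⟨u, ?_, h⟩
            intro hc
            exact hu1 ((hmut huQ).mp hc)
      exact p_follow_r (ihQ hndQ z₀ hcycQ x g hxoQ hxoutQ hgoQ hginQ)
  | comp P Q ihP ihQ =>
    intro hnd z₀ hcyc x g hxo hxout hgo hgin
    have hndP : (rchars P).Nodup := (List.nodup_append'.mp hnd).1
    have hndQ : (rchars Q).Nodup := (List.nodup_append'.mp hnd).2.1
    have hdisj : (rchars P).Disjoint (rchars Q) := (List.nodup_append'.mp hnd).2.2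
    have hPA : ∀ w ∈ P.matches', ∀ y ∈ w, y ∈ rchars P := fun w hw => mem_rchars P hw
    have hQB : ∀ w ∈ Q.matches', ∀ y ∈ w, y ∈ rchars Q := fun w hw => mem_rchars Q hw
    have disj : ∀ y, y ∈ rchars P → y ∈ rchars Q → False := fun y h1 h2 => hdisj h1 h2
    have hM : (P.comp Q).matches' = P.matches' * Q.matches' := rfl
    rw [hM] at hcyc hxo hxout hgo hgin ⊢
    set Pm := P.matches'
    set Qm := Q.matches'
    obtain ⟨lc, hlcne, hlcw⟩ := hcyc
    -- z₀ has an outgoing edge, so both components are nonempty and z₀ has a side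
    obtain ⟨hPne, hQne, hz₀occ⟩ :
        (∃ wp, wp ∈ Pm) ∧ (∃ wq, wq ∈ Qm) ∧ (z₀ ∈ rchars P ∨ z₀ ∈ rchars Q) := by
      cases hlcw with
      | nil => exact absurd rfl hlcne
      | cons hr _ =>
        obtain ⟨u, v, huv⟩ := hr
        replace huv := Language.mem_mul.mp huv
        obtain ⟨w₁, h₁, w₂, h₂, heq⟩ := huv
        refine ⟨⟨w₁, h₁⟩, ⟨w₂, h₂⟩, ?_⟩
        have : z₀ ∈ w₁ ++ w₂ := by rw [heq]; simp
        rcases List.mem_append.mp this with h | h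
        · exact Or.inl (hPA _ h₁ z₀ h)
        · exact Or.inr (hQB _ h₂ z₀ h)
    obtain ⟨wp, hwp⟩ := hPne
    obtain ⟨wq, hwq⟩ := hQne
    have hedgeQ : ∀ a b, a ∈ rchars Q → b ∈ LFollow (Pm * Qm) a →
        b ∈ LFollow Qm a ∧ b ∈ rchars Q := by
      intro a b ha hab
      have h := c4 hPA hQB disj hab ha
      obtain ⟨u, v, huv⟩ := id h
      exact ⟨h, hQB _ huv b (by simp)⟩
    have hedgeP' : ∀ a b, a ∈ rchars P →
        (b ∈ LFollow (Pm * Qm) a ∧ b ∈ rchars P) →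
        (b ∈ LFollow Pm a ∧ b ∈ rchars P) ∧ b ∈ rchars P := by
      intro a b ha ⟨hab, hb⟩
      exact ⟨⟨c2 hPA hQB disj hab ha hb, hb⟩, hb⟩
    have hsideF : ∀ a b, b ∈ LFollow (Pm * Qm) a → b ∈ rchars P ∨ b ∈ rchars Q := by
      intro a b h
      obtain ⟨u, v, huv⟩ := h
      replace huv := Language.mem_mul.mp huv
      obtain ⟨w₁, h₁, w₂, h₂, heq⟩ := huv
      have : b ∈ w₁ ++ w₂ := by rw [heq]; simp
      rcases List.mem_append.mp this with h | h
      · exact Or.inl (hPA _ h₁ b h)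
      · exact Or.inr (hQB _ h₂ b h)
    -- walks between P-side symbols stay on the P side
    have hTP : ∀ {a b : α} {l : List α}, a ∈ rchars P → b ∈ rchars P →
        RWalk (fun a b => b ∈ LFollow (Pm * Qm) a) a l b →
        RWalk (fun a b => b ∈ LFollow Pm a) a l b := by
      intro a b l ha hb hw
      have hw' : RWalk (fun a b => (b ∈ LFollow (Pm * Qm) a ∧ b ∈ rchars P) ∨
          (b ∈ LFollow (Pm * Qm) a ∧ b ∈ rchars Q)) a l b := by
        refine hw.imp ?_
        intro a' b' hab
        rcases hsideF a' b' hab with h | h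
        · exact Or.inl ⟨hab, h⟩
        · exact Or.inr ⟨hab, h⟩
      rcases hw'.cut with hpure | ⟨l₁, y, w, l₂, rfl, h₁, hs, h₃⟩
      · exact (walk_side hedgeP' ha hpure).1.imp (fun a b h => h.1)
      · -- the tail of the walk would stay on the Q side, contradiction
        exfalso
        have h₃' : RWalk (fun a b => b ∈ LFollow (Pm * Qm) a) w l₂ b :=
          h₃.imp (fun a b hab => by rcases hab with h | h
                                    exacts [h.1, h.1])
        obtain ⟨_, hbQ⟩ := walk_side hedgeQ hs.2 h₃'
        exact disj b hb hbQ
    have hTQ : ∀ {a b : α} {l : List α}, a ∈ rchars Q →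
        RWalk (fun a b => b ∈ LFollow (Pm * Qm) a) a l b →
        RWalk (fun a b => b ∈ LFollow Qm a) a l b ∧ b ∈ rchars Q := by
      intro a b l ha hw
      exact walk_side hedgeQ ha hw
    rcases hz₀occ with hz₀ | hz₀
    · -- P side
      -- all members of the orbit are on the P side
      have hmemP : ∀ {a : α}, (SR (Pm * Qm) a z₀ ∧ SR (Pm * Qm) z₀ a) → a ∈ rchars P := by
        rintro a ⟨h1, h2⟩
        obtain ⟨l1, hl1⟩ := id h1
        by_cases haP : a ∈ rchars P
        · exact haP
        · exfalso
          -- a must be on some side: it has an outgoing or is z₀ itself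
          cases hl1 with
          | nil => exact haP hz₀
          | cons hr hw' =>
            rcases hsideF _ _ hr with hb | hb
            · -- edge target on P side; a occurs in the witness word
              obtain ⟨u, v, huv⟩ := hr
              replace huv := Language.mem_mul.mp huv
              obtain ⟨w₁, h₁, w₂, h₂, heq⟩ := huv
              have : a ∈ w₁ ++ w₂ := by rw [heq]; simp
              rcases List.mem_append.mp this with h | h
              · exact haP (hPA _ h₁ a h)
              · -- a on the Q side: walks from a stay on Q side, can't reach z₀
                have haQ := hQB _ h₂ a h
                obtain ⟨l, hl⟩ := id h1
                obtain ⟨_, hz₀Q⟩ := hTQ haQ hl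
                exact disj z₀ hz₀ hz₀Q
            · obtain ⟨u, v, huv⟩ := hr
              replace huv := Language.mem_mul.mp huv
              obtain ⟨w₁, h₁, w₂, h₂, heq⟩ := huv
              have : a ∈ w₁ ++ w₂ := by rw [heq]; simp
              rcases List.mem_append.mp this with h | h
              · exact haP (hPA _ h₁ a h)
              · have haQ := hQB _ h₂ a h
                obtain ⟨l, hl⟩ := id h1
                obtain ⟨_, hz₀Q⟩ := hTQ haQ hl
                exact disj z₀ hz₀ hz₀Q
      have hxP : x ∈ rchars P := hmemP hxo
      have hgP : g ∈ rchars P := hmemP hgo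
      have hSRP : ∀ {a b : α}, a ∈ rchars P → b ∈ rchars P →
          SR (Pm * Qm) a b → SR Pm a b := by
        rintro a b ha hb ⟨l, hl⟩
        exact ⟨l, hTP ha hb hl⟩
      have hSRM : ∀ {a b : α}, SR Pm a b → SR (Pm * Qm) a b :=
        fun h => h.mono (fun a b hab => mul_follow_left hab hwq)
      have hmut : ∀ {a : α}, a ∈ rchars P →
          ((SR Pm a z₀ ∧ SR Pm z₀ a) ↔ (SR (Pm * Qm) a z₀ ∧ SR (Pm * Qm) z₀ a)) := by
        intro a ha
        constructor
        · rintro ⟨h1, h2⟩; exact ⟨hSRM h1, hSRM h2⟩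
        · rintro ⟨h1, h2⟩; exact ⟨hSRP ha hz₀ h1, hSRP hz₀ ha h2⟩
      have hcycP : ∃ lc, lc ≠ ([] : List α) ∧
          RWalk (fun a b => b ∈ LFollow Pm a) z₀ lc z₀ :=
        ⟨lc, hlcne, hTP hz₀ hz₀ hlcw⟩
      have hxoP : SR Pm x z₀ ∧ SR Pm z₀ x := (hmut hxP).mpr hxo
      have hgoP : SR Pm g z₀ ∧ SR Pm z₀ g := (hmut hgP).mpr hgo
      have hxoutP : x ∈ LLast Pm ∨
          ∃ v, ¬(SR Pm v z₀ ∧ SR Pm z₀ v) ∧ v ∈ LFollow Pm x := by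
        rcases hxout with h | ⟨v, hv1, hv2⟩
        · exact Or.inl (c5 hPA hQB disj h hxP).1
        · rcases hsideF _ _ hv2 with hvP | hvQ
          · refine Or.inr ⟨v, ?_, c2 hPA hQB disj hv2 hxP hvP⟩
            intro hc
            exact hv1 ((hmut hvP).mp hc)
          · exact Or.inl (c3 hPA hQB disj hv2 hxP hvQ).1
      have hginP : g ∈ LFirst Pm ∨
          ∃ u, ¬(SR Pm u z₀ ∧ SR Pm z₀ u) ∧ g ∈ LFollow Pm u := by
        rcases hgin with h | ⟨u, hu1, hu2⟩
        · exact Or.inl (c1 hPA hQB disj h hgP)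
        · -- determine u's side
          obtain ⟨uu, vv, huv⟩ := id hu2
          replace huv := Language.mem_mul.mp huv
          obtain ⟨w₁, h₁, w₂, h₂, heq⟩ := huv
          have : u ∈ w₁ ++ w₂ := by rw [heq]; simp
          rcases List.mem_append.mp this with h | h
          · have huP : u ∈ rchars P := hPA _ h₁ u h
            refine Or.inr ⟨u, ?_, c2 hPA hQB disj hu2 huP hgP⟩
            intro hc
            exact hu1 ((hmut huP).mp hc)
          · have huQ : u ∈ rchars Q := hQB _ h₂ u h
            have := c4 hPA hQB disj hu2 huQ
            obtain ⟨u1, v1, huv1⟩ := this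
            exact absurd (hQB _ huv1 g (by simp)) (fun hc => disj g hgP hc)
      exact mul_follow_left (ihP hndP z₀ hcycP x g hxoP hxoutP hgoP hginP) hwq
    · -- Q side
      have hmemQ : ∀ {a : α}, (SR (Pm * Qm) a z₀ ∧ SR (Pm * Qm) z₀ a) → a ∈ rchars Q := by
        rintro a ⟨h1, ⟨l2, hl2⟩⟩
        exact (hTQ hz₀ hl2).2
      have hxQ : x ∈ rchars Q := hmemQ hxo
      have hgQ : g ∈ rchars Q := hmemQ hgo
      have hSRQ : ∀ {a b : α}, a ∈ rchars Q → SR (Pm * Qm) a b → SR Qm a b := by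
        rintro a b ha ⟨l, hl⟩
        exact ⟨l, (hTQ ha hl).1⟩
      have hSRM : ∀ {a b : α}, SR Qm a b → SR (Pm * Qm) a b :=
        fun h => h.mono (fun a b hab => mul_follow_right hab hwp)
      have hmut : ∀ {a : α}, a ∈ rchars Q →
          ((SR Qm a z₀ ∧ SR Qm z₀ a) ↔ (SR (Pm * Qm) a z₀ ∧ SR (Pm * Qm) z₀ a)) := by
        intro a ha
        constructor
        · rintro ⟨h1, h2⟩; exact ⟨hSRM h1, hSRM h2⟩
        · rintro ⟨h1, h2⟩; exact ⟨hSRQ ha h1, hSRQ hz₀ h2⟩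
      have hcycQ : ∃ lc, lc ≠ ([] : List α) ∧
          RWalk (fun a b => b ∈ LFollow Qm a) z₀ lc z₀ :=
        ⟨lc, hlcne, (hTQ hz₀ hlcw).1⟩
      have hxoQ : SR Qm x z₀ ∧ SR Qm z₀ x := (hmut hxQ).mpr hxo
      have hgoQ : SR Qm g z₀ ∧ SR Qm z₀ g := (hmut hgQ).mpr hgo
      have hxoutQ : x ∈ LLast Qm ∨
          ∃ v, ¬(SR Qm v z₀ ∧ SR Qm z₀ v) ∧ v ∈ LFollow Qm x := by
        rcases hxout with h | ⟨v, hv1, hv2⟩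
        · exact Or.inl (c6 hPA hQB disj h hxQ)
        · have hv2' := c4 hPA hQB disj hv2 hxQ
          obtain ⟨u1, v1, huv1⟩ := id hv2'
          have hvQ : v ∈ rchars Q := hQB _ huv1 v (by simp)
          refine Or.inr ⟨v, ?_, hv2'⟩
          intro hc
          exact hv1 ((hmut hvQ).mp hc)
      have hginQ : g ∈ LFirst Qm ∨
          ∃ u, ¬(SR Qm u z₀ ∧ SR Qm z₀ u) ∧ g ∈ LFollow Qm u := by
        rcases hgin with h | ⟨u, hu1, hu2⟩
        · exact Or.inl (c1' hPA hQB disj h hgQ).2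
        · obtain ⟨uu, vv, huv⟩ := id hu2
          replace huv := Language.mem_mul.mp huv
          obtain ⟨w₁, h₁, w₂, h₂, heq⟩ := huv
          have : u ∈ w₁ ++ w₂ := by rw [heq]; simp
          rcases List.mem_append.mp this with h | h
          · have huP : u ∈ rchars P := hPA _ h₁ u h
            exact Or.inl (c3 hPA hQB disj hu2 huP hgQ).2
          · have huQ : u ∈ rchars Q := hQB _ h₂ u h
            refine Or.inr ⟨u, ?_, c4 hPA hQB disj hu2 huQ⟩
            intro hc
            exact hu1 ((hmut huQ).mp hc)
      exact mul_follow_right (ihQ hndQ z₀ hcycQ x g hxoQ hxoutQ hgoQ hginQ) hwp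
  | star P ihP =>
    intro hnd z₀ hcyc x g hxo hxout hgo hgin
    have hM : (P.star).matches' = P.matches'∗ := rfl
    rw [hM] at hcyc hxo hxout hgo hgin ⊢
    set Pm := P.matches'
    set M := (Pm∗ : Language α) with hMdef
    -- U : symbols occurring in some word of Pm
    -- every symbol with an edge occurs in some word of Pm
    have hocc : ∀ {a b : α}, b ∈ LFollow M a →
        (∃ w ∈ Pm, a ∈ w) ∧ (∃ w ∈ Pm, b ∈ w) := by
      intro a b h
      obtain ⟨u, v, huv⟩ := h
      obtain ⟨L, hL, hmem⟩ := Language.mem_kstar.mp huv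
      constructor
      · have : a ∈ L.flatten := by rw [← hL]; simp
        obtain ⟨p, hp, hap⟩ := List.mem_flatten.mp this
        exact ⟨p, hmem p hp, hap⟩
      · have : b ∈ L.flatten := by rw [← hL]; simp
        obtain ⟨p, hp, hbp⟩ := List.mem_flatten.mp this
        exact ⟨p, hmem p hp, hbp⟩
    -- all occurring symbols are mutually reachable
    have hUreach : ∀ {u v : α}, (∃ w ∈ Pm, u ∈ w) → (∃ w ∈ Pm, v ∈ w) → SR M u v := by
      rintro u v ⟨w₁, hw₁, hu⟩ ⟨w₂, hw₂, hv⟩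
      obtain ⟨zl, hzl1, hzl2⟩ := reach_tail (star_mem hw₁ : w₁ ∈ M) hu
      have hzl2' : zl ∈ LLast Pm := s_last hzl2
      obtain ⟨hh, hh1, hh2⟩ := reach_head (star_mem hw₂ : w₂ ∈ M) hv
      have hh1' : hh ∈ LFirst Pm := s_first hh1
      exact (hzl1.trans (SR.single (star_boundary hzl2' hh1'))).trans hh2
    -- z₀ occurs
    obtain ⟨lc, hlcne, hlcw⟩ := hcyc
    have hz₀occ : ∃ w ∈ Pm, z₀ ∈ w := by
      cases hlcw with
      | nil => exact absurd rfl hlcne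
      | cons hr _ => exact (hocc hr).1
    -- out-gate must be accepting
    have hxL : x ∈ LLast Pm := by
      rcases hxout with h | ⟨v, hv1, hv2⟩
      · exact s_last h
      · exfalso
        have hvocc := (hocc hv2).2
        have hxocc := (hocc hv2).1
        exact hv1 ⟨hUreach hvocc hz₀occ, hUreach hz₀occ hvocc⟩
    have hgF : g ∈ LFirst Pm := by
      rcases hgin with h | ⟨u, hu1, hu2⟩
      · exact s_first h
      · exfalso
        have huocc := (hocc hu2).1
        exact hu1 ⟨hUreach huocc hz₀occ, hUreach hz₀occ huocc⟩
    exact star_boundary hxL hgF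

end gate

section auto

variable {α β σ : Type*}

inductive APath (A : NFA β σ) : σ → List β → σ → Prop
  | nil (q : σ) : APath A q [] q
  | cons {q₁ q₂ q₃ : σ} {b : β} {w : List β} :
      q₂ ∈ A.step q₁ b → APath A q₂ w q₃ → APath A q₁ (b :: w) q₃

theorem NFA.evalFrom_mono (A : NFA β σ) {S T : Set σ} (h : S ⊆ T) :
    ∀ (w : List β), A.evalFrom S w ⊆ A.evalFrom T w := by
  intro w
  induction w generalizing S T with
  | nil => simpa using h
  | cons b w ih =>
    have h1 : A.stepSet S b ⊆ A.stepSet T b := by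
      intro q hq
      rw [NFA.mem_stepSet] at hq ⊢
      obtain ⟨s, hs, hq⟩ := hq
      exact ⟨s, h hs, hq⟩
    exact ih h1

theorem APath.mem_evalFrom {A : NFA β σ} {q q' : σ} {w : List β}
    (h : APath A q w q') : q' ∈ A.evalFrom {q} w := by
  induction h with
  | nil => simp [NFA.evalFrom_nil]
  | @cons q₁ q₂ q₃ b w hs _ ih =>
    have h1 : A.evalFrom {q₁} (b :: w) = A.evalFrom (A.stepSet {q₁} b) w := rfl
    rw [h1]
    refine NFA.evalFrom_mono A ?_ w ih
    intro s hs'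
    rw [Set.mem_singleton_iff] at hs'
    subst hs'
    rw [NFA.mem_stepSet]
    exact ⟨q₁, rfl, hs⟩

theorem unit_list_eq : ∀ (w₁ w₂ : List Unit), w₁.length = w₂.length → w₁ = w₂ := by
  intro w₁
  induction w₁ with
  | nil =>
    intro w₂ h
    cases w₂ with
    | nil => rfl
    | cons b t => simp at h
  | cons a t ih =>
    intro w₂ h
    cases w₂ with
    | nil => simp at h
    | cons b t' =>
      simp only [List.length_cons, Nat.add_right_cancel_iff] at h
      cases a; cases b
      rw [ih t' h]

end auto

section mainsec

variable {π : Type*} {M : Set (List π)} {f : π → Unit} {j : ℕ}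

theorem walk_apath {x z : π} {l : List π}
    (h : RWalk (fun a b => b ∈ LFollow M a) x l z) :
    APath (glushkov M f) (some x) (l.map f) (some z) := by
  induction h with
  | nil => exact APath.nil _
  | @cons a b z' l hr _ ih =>
    refine APath.cons (q₂ := some b) ?_ ih
    show ∃ y, y ∈ LFollow M a ∧ f y = f b ∧ some b = some y
    exact ⟨b, hr, rfl, rfl⟩

/-- liveness: can extend by `j-1` follow steps -/
def LiveC (M : Set (List π)) (j : ℕ) (y : π) : Prop :=
  ∃ l z, RWalk (fun a b => b ∈ LFollow M a) y l z ∧ l.length = j - 1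

theorem live_of_walk {y z : π} {l : List π}
    (h : RWalk (fun a b => b ∈ LFollow M a) y l z) (hl : j - 1 ≤ l.length) :
    LiveC M j y := by
  obtain ⟨z', hz'⟩ := h.take (j - 1)
  exact ⟨_, z', hz', by rw [List.length_take]; omega⟩

theorem uniq_follow (hkla : kLA (glushkov M f) j) {a b₁ b₂ : π}
    (h₁ : b₁ ∈ LFollow M a) (h₂ : b₂ ∈ LFollow M a)
    (hl₁ : LiveC M j b₁) (hl₂ : LiveC M j b₂) : b₁ = b₂ := by
  by_contra hne
  obtain ⟨l₁, z₁, hw₁, hlen₁⟩ := hl₁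
  obtain ⟨l₂, z₂, hw₂, hlen₂⟩ := hl₂
  have hm₁ : (some b₁ : Option π) ∈ (glushkov M f).step (some a) () := by
    show ∃ y, y ∈ LFollow M a ∧ f y = () ∧ (some b₁ : Option π) = some y
    exact ⟨b₁, h₁, rfl, rfl⟩
  have hm₂ : (some b₂ : Option π) ∈ (glushkov M f).step (some a) () := by
    show ∃ y, y ∈ LFollow M a ∧ f y = () ∧ (some b₂ : Option π) = some y
    exact ⟨b₂, h₂, rfl, rfl⟩
  have hne' : (some b₁ : Option π) ≠ some b₂ := by simpa using hne
  have hdisj := hkla.2 (some a) () (some b₁) (some b₂) hm₁ hm₂ hne'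
    (l₁.map f) (by simpa using hlen₁)
  have hp₁ : (some z₁ : Option π) ∈ (glushkov M f).evalFrom {some b₁} (l₁.map f) :=
    APath.mem_evalFrom (walk_apath hw₁)
  have heq : l₁.map f = l₂.map f := unit_list_eq _ _ (by simp [hlen₁, hlen₂])
  have hp₂ : (some z₂ : Option π) ∈ (glushkov M f).evalFrom {some b₂} (l₁.map f) := by
    rw [heq]
    exact APath.mem_evalFrom (walk_apath hw₂)
  rcases hdisj with h | h
  · rw [h] at hp₁; exact hp₁
  · rw [h] at hp₂; exact hp₂

theorem uniq_first (hkla : kLA (glushkov M f) j) {b₁ b₂ : π}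
    (h₁ : b₁ ∈ LFirst M) (h₂ : b₂ ∈ LFirst M)
    (hl₁ : LiveC M j b₁) (hl₂ : LiveC M j b₂) : b₁ = b₂ := by
  by_contra hne
  obtain ⟨l₁, z₁, hw₁, hlen₁⟩ := hl₁
  obtain ⟨l₂, z₂, hw₂, hlen₂⟩ := hl₂
  have hm₁ : (some b₁ : Option π) ∈ (glushkov M f).step none () := by
    show ∃ y, y ∈ LFirst M ∧ f y = () ∧ (some b₁ : Option π) = some y
    exact ⟨b₁, h₁, rfl, rfl⟩
  have hm₂ : (some b₂ : Option π) ∈ (glushkov M f).step none () := by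
    show ∃ y, y ∈ LFirst M ∧ f y = () ∧ (some b₂ : Option π) = some y
    exact ⟨b₂, h₂, rfl, rfl⟩
  have hne' : (some b₁ : Option π) ≠ some b₂ := by simpa using hne
  have hdisj := hkla.2 none () (some b₁) (some b₂) hm₁ hm₂ hne'
    (l₁.map f) (by simpa using hlen₁)
  have hp₁ : (some z₁ : Option π) ∈ (glushkov M f).evalFrom {some b₁} (l₁.map f) :=
    APath.mem_evalFrom (walk_apath hw₁)
  have heq : l₁.map f = l₂.map f := unit_list_eq _ _ (by simp [hlen₁, hlen₂])
  have hp₂ : (some z₂ : Option π) ∈ (glushkov M f).evalFrom {some b₂} (l₁.map f) := by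
    rw [heq]
    exact APath.mem_evalFrom (walk_apath hw₂)
  rcases hdisj with h | h
  · rw [h] at hp₁; exact hp₁
  · rw [h] at hp₂; exact hp₂

theorem hfirst {w : List π} (hw : w ∈ M) (h0 : 0 < w.length) : w[0] ∈ LFirst M := by
  have h1 : w.drop 0 = w[0] :: w.drop 1 := List.drop_eq_getElem_cons h0
  rw [List.drop_zero] at h1
  exact ⟨w.drop 1, h1 ▸ hw⟩

theorem wlast {w : List π} (hw : w ∈ M) (h0 : 0 < w.length) :
    w[w.length - 1] ∈ LLast M := by
  have h1 := List.drop_eq_getElem_cons (l := w) (i := w.length - 1) (by omega)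
  rw [show w.length - 1 + 1 = w.length by omega, List.drop_length] at h1
  refine ⟨w.take (w.length - 1), ?_⟩
  have h2 := w.take_append_drop (w.length - 1)
  rw [h1] at h2
  rw [h2]
  exact hw

theorem suffix_walk {w : List π} (hw : w ∈ M) {i : ℕ} (h : i < w.length) :
    RWalk (fun a b => b ∈ LFollow M a) w[i] (w.drop (i + 1))
      ((w.drop (i + 1)).getLastD w[i]) := by
  refine mid_walk (w.drop (i + 1)) w[i] (w.take i) [] ?_
  have h1 : w.drop i = w[i] :: w.drop (i + 1) := List.drop_eq_getElem_cons h
  have h2 := w.take_append_drop i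
  rw [h1] at h2
  rw [show w.take i ++ (w[i] :: w.drop (i + 1)) ++ [] = w by simpa using h2]
  exact hw

theorem live_at (hj : 1 ≤ j) {w : List π} (hw : w ∈ M) {i : ℕ} (h : i < w.length)
    (hrem : i + j ≤ w.length) : LiveC M j w[i] :=
  live_of_walk (suffix_walk hw h) (by rw [List.length_drop]; omega)

theorem word_last_mem {w : List π} (hw : w ∈ M) {i : ℕ} (h : i < w.length) :
    (w.drop (i + 1)).getLastD w[i] ∈ LLast M := by
  refine word_last (w.drop (i + 1)) w[i] (w.take i) ?_
  have h1 : w.drop i = w[i] :: w.drop (i + 1) := List.drop_eq_getElem_cons h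
  have h2 := w.take_append_drop i
  rw [h1] at h2
  rw [h2]
  exact hw

theorem agree (hj : 1 ≤ j) (hkla : kLA (glushkov M f) j) :
    ∀ (i : ℕ) (w w' : List π), w ∈ M → w' ∈ M → i + j ≤ w.length → i + j ≤ w'.length →
    ∀ (h1 : i < w.length) (h2 : i < w'.length), w[i] = w'[i] := by
  intro i
  induction i with
  | zero =>
    intro w w' hw hw' hlen hlen' h1 h2
    exact uniq_first hkla (hfirst hw h1) (hfirst hw' h2)
      (live_at hj hw h1 hlen) (live_at hj hw' h2 hlen')
  | succ i ih =>
    intro w w' hw hw' hlen hlen' h1 h2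
    have hi : w[i]'(by omega) = w'[i]'(by omega) :=
      ih w w' hw hw' (by omega) (by omega) (by omega) (by omega)
    have hp1 : w[i+1] ∈ LFollow M (w[i]'(by omega)) := word_pair hw h1
    have hp2 : w'[i+1] ∈ LFollow M (w[i]'(by omega)) := hi ▸ word_pair hw' h2
    exact uniq_follow hkla hp1 hp2 (live_at hj hw h1 hlen) (live_at hj hw' h2 hlen')

end mainsec

section final

theorem mod_helper {q d e : ℕ} (hd : d < q) (he : e < q) (c m : ℕ)
    (h : c * q + d = m * q + e) : d = e := by
  have h' : d + c * q = e + m * q := by omega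
  have := congrArg (· % q) h'
  simpa [Nat.add_mul_mod_self_right, Nat.mod_eq_of_lt hd, Nat.mod_eq_of_lt he] using this

theorem stmt7' : ∀ j : ℕ, 1 ≤ j →
    ¬ (∃ (π : Type) (E : RegularExpression π) (f : π → Unit),
      (rchars E).Nodup ∧ kLA (glushkov E.matches' f) j ∧
      L4 j = {w | ∃ ws ∈ E.matches', ws.map f = w}) := by
  rintro j hj ⟨π, E, f, hnd, hkla, hL⟩
  classical
  set M := E.matches' with hMdef
  set q := 2 * j + 1 with hq
  -- words of every admissible length
  have exists_word : ∀ n : ℕ, (∃ m, n = m * q ∨ n = m * q + j) →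
      ∃ w, w ∈ M ∧ w.length = n := by
    intro n hn
    have h1 : (List.replicate n () : List Unit) ∈ L4 j := by
      obtain ⟨m, hm⟩ := hn
      exact ⟨m, by simpa using hm⟩
    rw [hL] at h1
    obtain ⟨ws, hws, hmap⟩ := h1
    exact ⟨ws, hws, by have := congrArg List.length hmap; simpa using this⟩
  have len_S : ∀ w ∈ M, ∃ m, w.length = m * q ∨ w.length = m * q + j := by
    intro w hw
    have h1 : (w.map f) ∈ L4 j := by rw [hL]; exact ⟨w, hw, rfl⟩
    obtain ⟨m, hm⟩ := h1
    exact ⟨m, by simpa using hm⟩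
  -- the spine
  have hex : ∀ n : ℕ, ∃ w, w ∈ M ∧ w.length = (n + j) * q :=
    fun n => exists_word _ ⟨n + j, Or.inl rfl⟩
  choose W hWmem hWlen using hex
  have hWi : ∀ i : ℕ, i + j ≤ (W i).length := by
    intro i
    rw [hWlen i]
    calc i + j ≤ (i + j) * 1 := by omega
    _ ≤ (i + j) * q := Nat.mul_le_mul_left _ (by omega)
  have hWi' : ∀ i : ℕ, i < (W i).length := fun i => by have := hWi i; omega
  set X : ℕ → π := fun i => (W i)[i]'(hWi' i) with hXdef
  have hXagree : ∀ w, w ∈ M → ∀ i, i + j ≤ w.length → ∀ (h : i < w.length), w[i] = X i := by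
    intro w hw i hlen h
    exact agree hj hkla i w (W i) hw (hWmem i) hlen (hWi i) h (hWi' i)
  have hXfollow : ∀ i, X (i + 1) ∈ LFollow M (X i) := by
    intro i
    have h1 : (W (i+1))[i]'(by have := hWi (i+1); omega) = X i :=
      hXagree (W (i+1)) (hWmem (i+1)) i (by have := hWi (i+1); omega) _
    have h2 : (W (i+1))[i+1]'(hWi' (i+1)) = X (i + 1) :=
      hXagree (W (i+1)) (hWmem (i+1)) (i+1) (hWi (i+1)) _
    have := word_pair (hWmem (i+1)) (hWi' (i+1))
    rw [h1, h2] at this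
    exact this
  have hXlive : ∀ i k : ℕ, ∃ l z, RWalk (fun a b => b ∈ LFollow M a) (X i) l z ∧ k ≤ l.length := by
    intro i k
    have hlen : i + k + j ≤ (W (i + k)).length := by
      rw [hWlen (i+k)]
      calc i + k + j ≤ (i + k + j) * 1 := by omega
      _ ≤ (i + k + j) * q := Nat.mul_le_mul_left _ (by omega)
    have hi : i < (W (i+k)).length := by omega
    have hXi : (W (i+k))[i]'hi = X i :=
      hXagree (W (i+k)) (hWmem (i+k)) i (by omega) _
    have hw := suffix_walk (hWmem (i+k)) hi
    rw [hXi] at hw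
    refine ⟨_, _, hw, ?_⟩
    rw [List.length_drop]
    omega
  have hXliveC : ∀ i, LiveC M j (X i) := by
    intro i
    obtain ⟨l, z, hw, hk⟩ := hXlive i (j - 1)
    exact live_of_walk hw hk
  have hXfirst : X 0 ∈ LFirst M := by
    have h0 : (W 0)[0]'(hWi' 0) = X 0 := rfl
    exact h0 ▸ hfirst (hWmem 0) (hWi' 0)
  have huniqX : ∀ i b, b ∈ LFollow M (X i) → LiveC M j b → b = X (i + 1) := by
    intro i b hb hlb
    exact uniq_follow hkla hb (hXfollow i) hlb (hXliveC (i+1))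
  have hXwalk : ∀ k i : ℕ, ∃ l, RWalk (fun a b => b ∈ LFollow M a) (X i) l (X (i + k)) ∧
      l.length = k := by
    intro k
    induction k with
    | zero => exact fun i => ⟨[], RWalk.nil _, rfl⟩
    | succ k ih =>
      intro i
      obtain ⟨l, hw, hlen⟩ := ih (i + 1)
      refine ⟨X (i+1) :: l, RWalk.cons (hXfollow i) ?_, by simp [hlen]⟩
      rw [show i + (k + 1) = i + 1 + k by omega]
      exact hw
  -- pigeonhole: the spine repeats
  have hXchars : ∀ i, X i ∈ rchars E := by
    intro i
    exact mem_rchars E (hWmem i) _ (List.getElem_mem _)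
  obtain ⟨a, b, hab, hXab⟩ : ∃ a b : ℕ, a < b ∧ X a = X b := by
    have hmaps : ∀ i ∈ Finset.range ((rchars E).toFinset.card + 1),
        X i ∈ (rchars E).toFinset := by
      intro i _
      rw [List.mem_toFinset]
      exact hXchars i
    obtain ⟨a, _, b, _, hne, heq⟩ :=
      Finset.exists_ne_map_eq_of_card_lt_of_maps_to (by simp) hmaps
    rcases Nat.lt_or_ge a b with h | h
    · exact ⟨a, b, h, heq⟩
    · exact ⟨b, a, by omega, heq.symm⟩
  set p₀ := b - a with hp₀
  have hp₀pos : 1 ≤ p₀ := by omega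
  have hper : ∀ i, a ≤ i → X (i + p₀) = X i := by
    intro i hi
    induction i, hi using Nat.le_induction with
    | base => rw [show a + p₀ = b by omega]; exact hXab.symm
    | succ i hi ih =>
      have h1 : X (i + 1 + p₀) ∈ LFollow M (X i) := by
        rw [show i + 1 + p₀ = (i + p₀) + 1 by omega]
        rw [← ih]
        exact hXfollow (i + p₀)
      exact huniqX i _ h1 (hXliveC _)
  have hperT : ∀ T i, a ≤ i → X (i + p₀ * T) = X i := by
    intro T
    induction T with
    | zero => intro i _; simp
    | succ T ih =>
      intro i hi
      rw [show i + p₀ * (T + 1) = (i + p₀) + p₀ * T by ring]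
      rw [ih (i + p₀) (by omega)]
      exact hper i hi
  -- the orbit
  set InO : π → Prop := fun y => SR M y (X a) ∧ SR M (X a) y with hInO
  have hXO : ∀ m, a ≤ m → InO (X m) := by
    intro m hm
    constructor
    · -- X m reaches X a going forward around the loop
      obtain ⟨l, hw, _⟩ := hXwalk (a + p₀ * (m + 1) - m) m
      rw [show m + (a + p₀ * (m + 1) - m) = a + p₀ * (m + 1) by
        have : m + 1 ≤ p₀ * (m + 1) := Nat.le_mul_of_pos_left _ hp₀pos
        omega] at hw
      rw [hperT (m+1) a le_rfl] at hw
      exact ⟨l, hw⟩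
    · obtain ⟨l, hw, _⟩ := hXwalk (m - a) a
      rw [show a + (m - a) = m by omega] at hw
      exact ⟨l, hw⟩
  have hOlive : ∀ y, InO y → LiveC M j y := by
    rintro y ⟨⟨l, hw⟩, _⟩
    obtain ⟨l₂, hw₂, hlen₂⟩ := (hXwalk (j-1) a)
    exact live_of_walk (hw.append hw₂) (by rw [List.length_append]; omega)
  -- out-gates
  have og : ∀ n : ℕ, (∃ m, n = m * q ∨ n = m * q + j) → a + j + 1 ≤ n →
      ∃ i, n - j ≤ i ∧ i ≤ n - 1 ∧
        (X i ∈ LLast M ∨ ∃ v, ¬ InO v ∧ v ∈ LFollow M (X i)) := by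
    intro n hS hna
    obtain ⟨w, hw, hwlen⟩ := exists_word n hS
    by_cases hdev : ∃ m, ∃ h : m < w.length, w[m] ≠ X m
    · -- deviation: first deviation point gives an exit edge
      obtain ⟨m₀, hm₀lt, hm₀ne, hmineq⟩ :
          ∃ m₀, ∃ h : m₀ < w.length, w[m₀] ≠ X m₀ ∧
            ∀ k, k < m₀ → ∀ h : k < w.length, w[k] = X k := by
        obtain ⟨hlt, hne⟩ := Nat.find_spec hdev
        refine ⟨Nat.find hdev, hlt, hne, ?_⟩
        intro k hk h
        by_contra hc
        exact Nat.find_min hdev hk ⟨h, hc⟩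
      have hm₀pos : 1 ≤ m₀ := by
        rcases Nat.eq_zero_or_pos m₀ with h | h
        · subst h
          exact absurd (hXagree w hw 0 (by omega) hm₀lt) hm₀ne
        · exact h
      have hm₀big : n < m₀ + j := by
        by_contra hc
        exact hm₀ne (hXagree w hw m₀ (by omega) hm₀lt)
      obtain ⟨i, rfl⟩ : ∃ i, m₀ = i + 1 := ⟨m₀ - 1, by omega⟩
      refine ⟨i, by omega, by omega, Or.inr ⟨w[i+1], ?_, ?_⟩⟩
      · intro hvO
        have h1 : w[i+1] ∈ LFollow M (X i) := by
          have hwp := word_pair hw (i := i) (by omega)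
          have heq : w[i]'(by omega) = X i := hmineq i (by omega) _
          rw [heq] at hwp
          exact hwp
        exact hm₀ne (huniqX i _ h1 (hOlive _ hvO))
      · have hwp := word_pair hw (i := i) (by omega)
        have heq : w[i]'(by omega) = X i := hmineq i (by omega) _
        rw [heq] at hwp
        exact hwp
    · -- no deviation: the final letter is on the spine and accepting
      refine ⟨n - 1, by omega, le_rfl, Or.inl ?_⟩
      have hn1 : n - 1 < w.length := by omega
      have h1 : w[n-1] = X (n-1) := by
        by_contra hne
        exact hdev ⟨n - 1, hn1, hne⟩
      have h2 := wlast hw (by omega)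
      have hee : w[w.length - 1]'(by omega) = w[n-1]'hn1 := by
        congr 1
        omega
      rw [hee, h1] at h2
      exact h2
  -- the in-gate
  have hinex : ∃ m, InO (X m) := ⟨a, hXO a le_rfl⟩
  set ρ := Nat.find hinex with hρ
  have hgO : InO (X ρ) := Nat.find_spec hinex
  have hgin : X ρ ∈ LFirst M ∨ ∃ u, ¬ InO u ∧ X ρ ∈ LFollow M u := by
    rcases Nat.eq_zero_or_pos ρ with h | h
    · rw [h]; exact Or.inl hXfirst
    · refine Or.inr ⟨X (ρ - 1), Nat.find_min hinex (by omega), ?_⟩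
      have := hXfollow (ρ - 1)
      rw [show ρ - 1 + 1 = ρ by omega] at this
      exact this
  -- nontrivial cycle at X a
  have hcyc : ∃ lc, lc ≠ ([] : List π) ∧
      RWalk (fun a' b' => b' ∈ LFollow M a') (X a) lc (X a) := by
    obtain ⟨l, hw, hlen⟩ := hXwalk p₀ a
    rw [hper a le_rfl] at hw
    exact ⟨l, by intro hc; rw [hc] at hlen; simp at hlen; omega, hw⟩
  -- two out-gates from lengths N*q and N*q + j
  set N := a + j + 1 with hN
  have hNq : a + j + 1 ≤ N * q := by
    calc a + j + 1 = N * 1 := by omega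
    _ ≤ N * q := Nat.mul_le_mul_left _ (by omega)
  obtain ⟨i₁, hi₁l, hi₁r, hout₁⟩ := og (N * q) ⟨N, Or.inl rfl⟩ hNq
  obtain ⟨i₂, hi₂l, hi₂r, hout₂⟩ := og (N * q + j) ⟨N, Or.inr rfl⟩ (by omega)
  have hi₁a : a ≤ i₁ := by omega
  have hi₂a : a ≤ i₂ := by omega
  -- apply the orbit property
  have hg₁ : X ρ ∈ LFollow M (X i₁) :=
    gate E hnd (X a) hcyc (X i₁) (X ρ) (hXO i₁ hi₁a) hout₁ hgO hgin
  have hg₂ : X ρ ∈ LFollow M (X i₂) :=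
    gate E hnd (X a) hcyc (X i₂) (X ρ) (hXO i₂ hi₂a) hout₂ hgO hgin
  have hsucc₁ : X ρ = X (i₁ + 1) := huniqX i₁ _ hg₁ (hOlive _ hgO)
  have hsucc₂ : X ρ = X (i₂ + 1) := huniqX i₂ _ hg₂ (hOlive _ hgO)
  -- deduce a short period
  set d := i₂ - i₁ with hd
  have hd1 : 1 ≤ d := by omega
  have hd2 : d ≤ 2 * j - 1 := by omega
  have hdq : d < q := by omega
  have perD : ∀ m, i₁ + 1 ≤ m → X (m + d) = X m := by
    intro m hm
    induction m, hm using Nat.le_induction with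
    | base =>
      rw [show i₁ + 1 + d = i₂ + 1 by omega]
      rw [← hsucc₂, hsucc₁]
    | succ m hm ih =>
      have h1 : X (m + 1 + d) ∈ LFollow M (X m) := by
        rw [show m + 1 + d = (m + d) + 1 by omega, ← ih]
        exact hXfollow (m + d)
      exact huniqX m _ h1 (hXliveC _)
  -- shifting admissible lengths by d
  have shiftS : ∀ n : ℕ, (∃ m, n = m * q ∨ n = m * q + j) → i₁ + 1 + j ≤ n →
      ∃ m, n + d = m * q ∨ n + d = m * q + j := by
    intro n hS hn
    obtain ⟨w, hw, hwlen⟩ := exists_word n hS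
    set k := n - j with hk
    have hkw : k < w.length := by omega
    have hkX : w[k] = X k := hXagree w hw k (by omega) hkw
    have htw := suffix_walk hw hkw
    rw [hkX] at htw
    have hzlast := word_last_mem hw hkw
    rw [hkX] at hzlast
    obtain ⟨ls, hls, hlslen⟩ := hXwalk (k + d) 0
    rw [show (0 : ℕ) + (k + d) = k + d by omega] at hls
    rw [perD k (by omega)] at hls
    have hfull := hls.append htw
    have hmem := locality E hnd (X 0) _ _ hXfirst hfull hzlast
    have hlen : (X 0 :: (ls ++ w.drop (k + 1))).length = n + d := by
      simp [hlslen, List.length_drop]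
      omega
    obtain ⟨m, hm⟩ := len_S _ hmem
    rw [hlen] at hm
    exact ⟨m, hm⟩
  -- final arithmetic contradiction
  have h1 : ∃ m, N * q + q + d = m * q ∨ N * q + q + d = m * q + j := by
    have := shiftS (N * q + q) ⟨N + 1, Or.inl (by ring)⟩ (by omega)
    simpa using this
  have hdj : d = j := by
    obtain ⟨m, hm⟩ := h1
    rcases hm with hm | hm
    · have : (N + 1) * q + d = m * q + 0 := by rw [Nat.add_mul]; omega
      have := mod_helper hdq (by omega) (N+1) m this
      omega
    · have : (N + 1) * q + d = m * q + j := by rw [Nat.add_mul]; omega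
      exact mod_helper hdq (by omega) (N+1) m this
  have h2 : ∃ m, N * q + q + j + d = m * q ∨ N * q + q + j + d = m * q + j := by
    have := shiftS (N * q + q + j) ⟨N + 1, Or.inr (by ring)⟩ (by omega)
    simpa using this
  obtain ⟨m, hm⟩ := h2
  rcases hm with hm | hm
  · have : (N + 1) * q + (j + d) = m * q + 0 := by rw [Nat.add_mul]; omega
    have := mod_helper (by omega) (by omega) (N+1) m this
    omega
  · have : (N + 1) * q + (j + d) = m * q + j := by rw [Nat.add_mul]; omega
    have := mod_helper (by omega) (by omega) (N+1) m this
    omega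

end final


/-- For every `j ≥ 1`, `L((a^{2j+1})^*(ε + a^j))` is not `j`-lookahead deterministic. -/
theorem stmt7 : ∀ j : ℕ, 1 ≤ j → ¬ IsKLookaheadDet (L4 j) j := by
  intro j hj h
  exact stmt7' j hj h

end BD
end

section
/- If a unary regular language is k-block deterministic for some k, then it is one-unambiguous (i.e., 1-block deterministic). -/
namespace BD

open RegularExpression in
def wexp {β : Type*} : List β → RegularExpression β
  | [] => RegularExpression.epsilon
  | a :: t => (RegularExpression.char a).comp (wexp t)

lemma matches'_wexp {β : Type*} (l : List β) : (wexp l).matches' = {l} := by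
  induction l with
  | nil =>
    ext x
    rw [wexp, show (RegularExpression.epsilon : RegularExpression β) = 1 from rfl,
      RegularExpression.matches'_epsilon]
    exact (Language.mem_one x).trans Set.mem_singleton_iff.symm
  | cons a t ih =>
    ext x
    rw [wexp, RegularExpression.comp_def, RegularExpression.matches'_mul]
    simp only [RegularExpression.matches'_char, ih]
    constructor
    · rintro ⟨u, hu, v, hv, rfl⟩
      have hu' : u = [a] := hu
      have hv' : v = t := hv
      subst hu' hv'; rfl
    · rintro rfl
      exact ⟨[a], rfl, t, rfl, rfl⟩

lemma rchars_wexp {β : Type*} (l : List β) : rchars (wexp l) = l := by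
  induction l with
  | nil => rfl
  | cons a t ih => simp [wexp, rchars, ih]

/-- substitution of a word for each letter -/
def subst {β γ : Type*} (g : β → List γ) : RegularExpression β → RegularExpression γ
  | .zero => .zero
  | .epsilon => .epsilon
  | .char a => wexp (g a)
  | .plus p q => .plus (subst g p) (subst g q)
  | .comp p q => .comp (subst g p) (subst g q)
  | .star p => .star (subst g p)

lemma rchars_subst {β γ : Type*} (g : β → List γ) (E : RegularExpression β) :
    rchars (subst g E) = (rchars E).flatMap g := by
  induction E with
  | zero => rfl
  | epsilon => rfl
  | char a => simp [subst, rchars_wexp, rchars]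
  | plus p q ihp ihq => simp [subst, rchars, ihp, ihq]
  | comp p q ihp ihq => simp [subst, rchars, ihp, ihq]
  | star p ih => simpa [subst, rchars] using ih

lemma flatMap_flatten' {β γ : Type*} (W : List (List β)) (g : β → List γ) :
    W.flatten.flatMap g = (W.map (fun w => w.flatMap g)).flatten := by
  induction W with
  | nil => rfl
  | cons w W ih => simp [List.flatMap_append, ih]

/-- homomorphic image of a language under letter-to-word substitution -/
def lh {β γ : Type*} (g : β → List γ) (P : Language β) : Language γ :=
  {w' | ∃ w ∈ P, w.flatMap g = w'}

lemma matches'_subst {β γ : Type*} (g : β → List γ) (E : RegularExpression β) :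
    (subst g E).matches' = lh g E.matches' := by
  induction E with
  | zero =>
    ext x
    constructor
    · intro h; exact absurd h (by exact fun h => h)
    · rintro ⟨w, hw, rfl⟩; exact absurd hw (fun h => h)
  | epsilon =>
    ext x
    constructor
    · intro hx
      rw [show (subst g RegularExpression.epsilon : RegularExpression γ) = 1 from rfl,
        RegularExpression.matches'_epsilon, Language.mem_one] at hx
      exact ⟨[], by
        rw [show (RegularExpression.epsilon : RegularExpression β) = 1 from rfl,
          RegularExpression.matches'_epsilon]; exact Language.mem_one _ |>.2 rfl, by simp [hx]⟩
    · rintro ⟨w, hw, rfl⟩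
      rw [show (RegularExpression.epsilon : RegularExpression β) = 1 from rfl,
        RegularExpression.matches'_epsilon, Language.mem_one] at hw
      subst hw
      rw [show (subst g RegularExpression.epsilon : RegularExpression γ) = 1 from rfl,
        RegularExpression.matches'_epsilon]
      exact Language.mem_one _ |>.2 rfl
  | char a =>
    ext x
    simp only [subst, matches'_wexp, RegularExpression.matches'_char, lh, Set.mem_setOf_eq,
      Set.mem_singleton_iff]
    constructor
    · rintro rfl; exact ⟨[a], rfl, by simp⟩
    · rintro ⟨w, hw, rfl⟩
      have hw' : w = [a] := hw
      subst hw'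
      show [a].flatMap g ∈ {g a}
      simp only [List.flatMap_cons, List.flatMap_nil, List.append_nil]
      exact rfl
  | plus p q ihp ihq =>
    ext x
    rw [show subst g (p.plus q) = subst g p + subst g q from rfl,
      show p.plus q = p + q from rfl,
      RegularExpression.matches'_add, RegularExpression.matches'_add]
    simp only [Language.mem_add, ihp, ihq, lh, Set.mem_setOf_eq]
    constructor
    · rintro (⟨w, hw, rfl⟩ | ⟨w, hw, rfl⟩)
      · exact ⟨w, Or.inl hw, rfl⟩
      · exact ⟨w, Or.inr hw, rfl⟩
    · rintro ⟨w, hw | hw, rfl⟩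
      · exact Or.inl ⟨w, hw, rfl⟩
      · exact Or.inr ⟨w, hw, rfl⟩
  | comp p q ihp ihq =>
    ext x
    rw [show subst g (p.comp q) = subst g p * subst g q from rfl,
      show p.comp q = p * q from rfl,
      RegularExpression.matches'_mul, RegularExpression.matches'_mul]
    rw [Language.mem_mul]
    simp only [ihp, ihq, lh, Set.mem_setOf_eq]
    constructor
    · rintro ⟨a', ⟨u, hu, rfl⟩, b', ⟨v, hv, rfl⟩, rfl⟩
      exact ⟨u ++ v, Language.mem_mul.2 ⟨u, hu, v, hv, rfl⟩, by simp [List.flatMap_append]⟩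
    · rintro ⟨w, hw, rfl⟩
      rcases Language.mem_mul.1 hw with ⟨u, hu, v, hv, rfl⟩
      exact ⟨u.flatMap g, ⟨u, hu, rfl⟩, v.flatMap g, ⟨v, hv, rfl⟩, by simp [List.flatMap_append]⟩
  | star p ih =>
    ext x
    rw [show subst g p.star = (subst g p).star from rfl,
      RegularExpression.matches'_star, RegularExpression.matches'_star]
    rw [Language.mem_kstar]
    simp only [ih]
    constructor
    · rintro ⟨L, rfl, hL⟩
      -- each y ∈ L is flatMap g of some word in p.matches'
      suffices h : ∃ W : List (List β), (∀ w ∈ W, w ∈ p.matches') ∧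
          W.map (fun w => w.flatMap g) = L by
        rcases h with ⟨W, hW, rfl⟩
        refine ⟨W.flatten, Language.mem_kstar.2 ⟨W, rfl, hW⟩, ?_⟩
        simp [flatMap_flatten']
      clear ih
      induction L with
      | nil => exact ⟨[], by simp, rfl⟩
      | cons y L ihL =>
        rcases hL y (by simp) with ⟨w, hw, rfl⟩
        rcases ihL (fun z hz => hL z (by simp [hz])) with ⟨W, hW, rfl⟩
        refine ⟨w :: W, ?_, rfl⟩
        intro u hu
        rcases List.mem_cons.1 hu with rfl | hu
        exacts [hw, hW u hu]
    · rintro ⟨w, hw, rfl⟩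
      rcases Language.mem_kstar.1 hw with ⟨W, rfl, hW⟩
      refine ⟨W.map (fun w => w.flatMap g), by simp [flatMap_flatten'], ?_⟩
      intro y hy
      rcases List.mem_map.1 hy with ⟨u, hu, rfl⟩
      exact ⟨u, hW u hu, rfl⟩

section Decomp
variable {π : Type*}

lemma range_map_decomp {c : π} {k : ℕ} {u r : List (π × ℕ)} {x : π} {i : ℕ}
    (h : (List.range k).map (fun t => (c, t)) = u ++ (x, i) :: r) :
    x = c ∧ i = u.length ∧ i < k ∧
      r = ((List.range k).drop (i + 1)).map (fun t => (c, t)) := by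
  have hlen : k = u.length + (r.length + 1) := by
    have := congrArg List.length h
    simpa using this
  have hul : u.length < k := by omega
  have h1 : ((List.range k).map (fun t => (c, t)))[u.length]'(by simpa using hul) = (c, u.length) := by
    simp
  have h2 : (u ++ (x, i) :: r)[u.length]'(by simp) = (x, i) := by
    rw [List.getElem_append_right (le_refl u.length)]
    simp
  have h2' : (c, u.length) = (x, i) := by
    rw [← h1, ← h2]
    exact List.getElem_of_eq h _
  have hx : c = x := congrArg Prod.fst h2'
  have hi : u.length = i := congrArg Prod.snd h2'
  refine ⟨hx.symm, hi.symm, by omega, ?_⟩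
  have hdrop : ((List.range k).map (fun t => (c, t))).drop (u.length + 1) = r := by
    rw [h]
    rw [show u ++ (x, i) :: r = (u ++ [(x, i)]) ++ r by simp]
    rw [List.drop_left' (by simp)]
  rw [← hdrop, ← List.map_drop, hi]

lemma flat_decomp (k : π → ℕ) :
    ∀ (w : List π), (∀ c ∈ w, 1 ≤ k c) →
    ∀ (u : List (π × ℕ)) (x : π) (i : ℕ) (z : π × ℕ) (v : List (π × ℕ)),
      w.flatMap (fun c => (List.range (k c)).map (fun t => (c, t))) = u ++ (x, i) :: z :: v →
      (i + 1 < k x ∧ z = (x, i + 1)) ∨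
      (i + 1 = k x ∧ ∃ a b c', w = a ++ x :: b :: c' ∧ z = (b, 0)) := by
  intro w
  induction w with
  | nil =>
    intro _ u x i z v h
    exact absurd h (by simp)
  | cons c t ih =>
    intro hw u x i z v h
    rw [List.flatMap_cons] at h
    rcases List.append_eq_append_iff.1 h with ⟨u₂, hu, ht⟩ | ⟨r, hr, hd⟩
    · rcases ih (fun d hd => hw d (List.mem_cons_of_mem _ hd)) u₂ x i z v ht with
        hl | ⟨hk, a, b, c', hw', hz⟩
      · exact Or.inl hl
      · exact Or.inr ⟨hk, c :: a, b, c', by rw [hw']; rfl, hz⟩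
    · rcases r with _ | ⟨rh, r'⟩
      · simp only [List.nil_append] at hd
        rcases ih (fun d hd => hw d (List.mem_cons_of_mem _ hd)) [] x i z v hd.symm with
          hl | ⟨hk, a, b, c', hw', hz⟩
        · exact Or.inl hl
        · exact Or.inr ⟨hk, c :: a, b, c', by rw [hw']; rfl, hz⟩
      · rw [List.cons_append] at hd
        injection hd with hd1 hd2
        subst hd1
        obtain ⟨rfl, hi, hik, hr'⟩ := range_map_decomp hr
        rcases r' with _ | ⟨z2, r''⟩
        · have hke : k x - (i + 1) = 0 := by
            have := congrArg List.length hr'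
            simpa using this.symm
          have hik1 : i + 1 = k x := by omega
          simp only [List.nil_append] at hd2
          rcases t with _ | ⟨b, t'⟩
          · exact absurd hd2 (by simp)
          · rw [List.flatMap_cons] at hd2
            have hkb : 1 ≤ k b := hw b (by simp)
            have h0 : List.range (k b) = 0 :: List.drop 1 (List.range (k b)) := by
              conv_lhs => rw [← List.drop_zero (l := List.range (k b)),
                List.drop_eq_getElem_cons (by simp; omega)]
              simp
            rw [h0, List.map_cons, List.cons_append] at hd2
            injection hd2 with hz _
            exact Or.inr ⟨hik1, [], b, t', rfl, hz⟩
        · rw [List.cons_append] at hd2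
          injection hd2 with hz2 _
          have hlen' : 0 < k x - (i + 1) := by
            have := congrArg List.length hr'
            simp at this
            omega
          have hik1 : i + 1 < k x := by omega
          have hdr : List.drop (i + 1) (List.range (k x)) =
              (i + 1) :: List.drop (i + 2) (List.range (k x)) := by
            rw [List.drop_eq_getElem_cons (by simpa using hik1)]
            simp
          rw [hdr, List.map_cons] at hr'
          injection hr' with hz3 _
          exact Or.inl ⟨hik1, hz2.trans hz3⟩

end Decomp

section Main
variable {π : Type}

lemma unit_list_eq_s9 (l₁ l₂ : List Unit) (h : l₁.length = l₂.length) : l₁ = l₂ :=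
  List.ext_getElem h fun _ _ _ => Subsingleton.elim _ _

lemma unit_prefix (l₁ l₂ : List Unit) (h : l₁.length ≤ l₂.length) : l₁ <+: l₂ := by
  have e : ∀ l : List Unit, l = List.replicate l.length () := fun l =>
    unit_list_eq_s9 l _ (by simp)
  rw [e l₁, e l₂]
  exact ⟨List.replicate (l₂.length - l₁.length) (), by
    rw [← List.replicate_add]; congr 1; omega⟩

lemma first_lh (kk : π → ℕ) (M : Set (List π))
    (hocc : ∀ w ∈ M, ∀ c ∈ w, 1 ≤ kk c) {z : π × ℕ}
    (hz : z ∈ LFirst (lh (fun c => (List.range (kk c)).map (fun t => (c, t))) M)) :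
    ∃ c, c ∈ LFirst M ∧ z = (c, 0) := by
  obtain ⟨w', w, hwM, heq⟩ := hz
  rcases w with _ | ⟨c, t⟩
  · exact absurd heq (by simp)
  · rw [List.flatMap_cons] at heq
    have hkc : 1 ≤ kk c := hocc _ hwM c (by simp)
    have h0 : List.range (kk c) = 0 :: List.drop 1 (List.range (kk c)) := by
      conv_lhs => rw [← List.drop_zero (l := List.range (kk c)),
        List.drop_eq_getElem_cons (by simp; omega)]
      simp
    rw [h0, List.map_cons, List.cons_append] at heq
    injection heq with h1 _
    exact ⟨c, ⟨t, hwM⟩, h1.symm⟩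

lemma follow_lh (kk : π → ℕ) (M : Set (List π))
    (hocc : ∀ w ∈ M, ∀ c ∈ w, 1 ≤ kk c) {x : π} {i : ℕ} {z : π × ℕ}
    (hz : z ∈ LFollow (lh (fun c => (List.range (kk c)).map (fun t => (c, t))) M) (x, i)) :
    (i + 1 < kk x ∧ z = (x, i + 1)) ∨
    (i + 1 = kk x ∧ ∃ y, y ∈ LFollow M x ∧ z = (y, 0)) := by
  obtain ⟨u, v, w, hw, heq⟩ := hz
  rcases flat_decomp kk w (hocc w hw) u x i z v heq with hl | ⟨hk, a, b, c', hweq, hzz⟩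
  · exact Or.inl hl
  · exact Or.inr ⟨hk, b, ⟨a, c', hweq ▸ hw⟩, hzz⟩

end Main

/-- Every unary regular language that is `k`-block deterministic for some `k` is
one-unambiguous (i.e. `1`-block deterministic). -/
theorem stmt9 : ∀ L : Set (List Unit), (∃ k : ℕ, IsKBlockDet L k) →
    IsOneUnambiguous L := by
  rintro L ⟨k, π, E, f, hnd, ⟨-, hblen, hpre⟩, hL⟩
  set M := E.matches' with hMdef
  -- step memberships in the Glushkov automaton of the block expression
  have step_first : ∀ y, y ∈ LFirst M → some y ∈ (glushkov M f).step none (f y) :=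
    fun y hy => ⟨y, hy, rfl, rfl⟩
  have step_follow : ∀ x y, y ∈ LFollow M x → some y ∈ (glushkov M f).step (some x) (f y) :=
    fun x y hy => ⟨y, hy, rfl, rfl⟩
  -- singleton First and Follow
  have hfirst : ∀ y₁ ∈ LFirst M, ∀ y₂ ∈ LFirst M, y₁ = y₂ := by
    intro y₁ h₁ y₂ h₂
    by_contra hne
    have hne₁ : ((f y₁, some y₁) : List Unit × Option π) ≠ (f y₂, some y₂) := by
      intro hp
      exact hne (Option.some.inj (congrArg Prod.snd hp))
    have hne₂ : ((f y₂, some y₂) : List Unit × Option π) ≠ (f y₁, some y₁) := fun hp => hne₁ hp.symm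
    rcases le_total (f y₁).length (f y₂).length with hle | hle
    · exact hpre none (f y₁) (f y₂) (some y₁) (some y₂) (step_first _ h₁) (step_first _ h₂)
        hne₁ (unit_prefix _ _ hle)
    · exact hpre none (f y₂) (f y₁) (some y₂) (some y₁) (step_first _ h₂) (step_first _ h₁)
        hne₂ (unit_prefix _ _ hle)
  have hfollow : ∀ x, ∀ y₁ ∈ LFollow M x, ∀ y₂ ∈ LFollow M x, y₁ = y₂ := by
    intro x y₁ h₁ y₂ h₂
    by_contra hne
    have hne₁ : ((f y₁, some y₁) : List Unit × Option π) ≠ (f y₂, some y₂) := by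
      intro hp
      exact hne (Option.some.inj (congrArg Prod.snd hp))
    have hne₂ : ((f y₂, some y₂) : List Unit × Option π) ≠ (f y₁, some y₁) := fun hp => hne₁ hp.symm
    rcases le_total (f y₁).length (f y₂).length with hle | hle
    · exact hpre (some x) (f y₁) (f y₂) (some y₁) (some y₂) (step_follow _ _ h₁)
        (step_follow _ _ h₂) hne₁ (unit_prefix _ _ hle)
    · exact hpre (some x) (f y₂) (f y₁) (some y₂) (some y₁) (step_follow _ _ h₂)
        (step_follow _ _ h₁) hne₂ (unit_prefix _ _ hle)
  -- nonempty blocks at occurring positions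
  have hflen1 : ∀ y ∈ LFirst M, 1 ≤ (f y).length :=
    fun y hy => (hblen none (f y) ⟨some y, step_first y hy⟩).1
  have hflen2 : ∀ x y, y ∈ LFollow M x → 1 ≤ (f y).length :=
    fun x y hy => (hblen (some x) (f y) ⟨some y, step_follow x y hy⟩).1
  have hocc : ∀ w ∈ M, ∀ c ∈ w, 1 ≤ (f c).length := by
    intro w hw c hc
    obtain ⟨s, t, rfl⟩ := List.append_of_mem hc
    rcases List.eq_nil_or_concat s with rfl | ⟨s', d, rfl⟩
    · exact hflen1 c ⟨t, hw⟩
    · refine hflen2 d c ⟨s', t, ?_⟩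
      have hw' : s' ++ d :: c :: t ∈ M := by simpa [List.append_assoc] using hw
      exact hw'
  -- the expansion
  set kk : π → ℕ := fun x => (f x).length with hkk
  set g : π → List (π × ℕ) := fun c => (List.range (kk c)).map (fun t => (c, t)) with hg
  have hM' : (subst g E).matches' = lh g M := matches'_subst g E
  refine ⟨π × ℕ, subst g E, fun _ => (), ?_, ?_, ?_⟩
  · -- Nodup
    rw [rchars_subst, List.nodup_flatMap]
    constructor
    · intro x _
      exact ((List.nodup_range).map (fun a b h => congrArg Prod.snd h : Function.Injective
        (fun t => ((x, t) : π × ℕ))))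
    · refine hnd.imp ?_
      intro a b hab
      intro z hza hzb
      rcases List.mem_map.1 hza with ⟨i, -, rfl⟩
      rcases List.mem_map.1 hzb with ⟨j, -, hj⟩
      exact hab (congrArg Prod.fst hj).symm
  · -- Determinism
    constructor
    · exact ⟨none, rfl⟩
    · intro p b q₁ q₂ h₁ h₂
      rw [hM'] at h₁ h₂
      rcases p with _ | ⟨x, i⟩
      · obtain ⟨z₁, hz₁, -, rfl⟩ := h₁
        obtain ⟨z₂, hz₂, -, rfl⟩ := h₂
        obtain ⟨c₁, hc₁, rfl⟩ := first_lh kk M hocc hz₁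
        obtain ⟨c₂, hc₂, rfl⟩ := first_lh kk M hocc hz₂
        rw [hfirst c₁ hc₁ c₂ hc₂]
      · obtain ⟨z₁, hz₁, -, rfl⟩ := h₁
        obtain ⟨z₂, hz₂, -, rfl⟩ := h₂
        rcases follow_lh kk M hocc hz₁ with ⟨hlt₁, rfl⟩ | ⟨heq₁, y₁, hy₁, rfl⟩ <;>
          rcases follow_lh kk M hocc hz₂ with ⟨hlt₂, rfl⟩ | ⟨heq₂, y₂, hy₂, rfl⟩
        · rfl
        · omega
        · omega
        · rw [hfollow x y₁ hy₁ y₂ hy₂]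
  · -- the language
    rw [hL]
    ext w
    simp only [Set.mem_setOf_eq]
    have hlen_eq : ∀ ws : List π, ((ws.flatMap g).map (fun _ => ())).length
        = ((ws.map f).flatten).length := by
      intro ws
      simp only [List.length_map, List.length_flatMap, List.length_flatten, List.map_map]
      congr 1
      ext c
      simp [hg, hkk]
    constructor
    · rintro ⟨ws, hws, rfl⟩
      refine ⟨ws.flatMap g, hM' ▸ ⟨ws, hws, rfl⟩, ?_⟩
      exact unit_list_eq_s9 _ _ (hlen_eq ws)
    · rintro ⟨ws', hws', rfl⟩
      rw [hM'] at hws'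
      obtain ⟨ws, hws, rfl⟩ := hws'
      exact ⟨ws, hws, (unit_list_eq_s9 _ _ (hlen_eq ws)).symm⟩

end BD
end
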